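/- arXiv:2601.07222 — 7 statements merged into one kernel-verified Lean document; each statement's English description precedes it below -/
import Mathlib

section
/- Let r ≥ 1 and let a₁, …, a_r ≥ 1 be integers, d = a₁ + ⋯ + a_r, and let p = (p₁, …, p_r) ∈ 𝔽^r be a nonzero vector. Then the number of r-tuples (s₁, …, s_r) of polynomials in 𝔽[X] such that deg sᵢ ≤ aᵢ for all i, the coefficient of X^{aᵢ} in sᵢ equals pᵢ for all i, and every common divisor of s₁, …, s_r is a unit, equals q^d − q^{d−r+1}. In particular, this count depends only on d and r, and not on the individual degrees aᵢ nor on the choice of nonzero vector p. -/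
/-!
A based tuple `s` factors uniquely as `s = h • t` with `h = gcd s` monic and `t` a coprime based
tuple for the degrees `a - deg h`; this requires `deg h ≤ m`, the least `aᵢ` with `pᵢ ≠ 0`.
Writing `C(a)` for the number of coprime based tuples, counting all `q ^ ∑ aᵢ` based tuples
by their gcd gives `q ^ ∑ aᵢ = ∑_{e ≤ m} q ^ e · C(a - e)`. For `a - 1` the same identity,
multiplied by `q`, is the part `e ≥ 1` of this one, so `C(a) = q ^ ∑ aᵢ - q · q ^ ∑ (aᵢ - 1)`.
-/

open Polynomial Finset

theorem Finset.gcd_eq_one_iff_forall_isUnit {α ι : Type*} [CommMonoidWithZero α]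
    [NormalizedGCDMonoid α] {s : Finset ι} {f : ι → α} :
    s.gcd f = 1 ↔ ∀ g : α, (∀ i ∈ s, g ∣ f i) → IsUnit g := by
  refine ⟨fun h g hg => isUnit_of_dvd_one (h ▸ dvd_gcd hg), fun h => ?_⟩
  rw [← normalize_gcd, normalize_eq_one]
  exact h _ fun i => gcd_dvd

namespace BasedSections

variable {F : Type*} [Field F] [Fintype F] [DecidableEq F]

noncomputable def basedPolys (n : ℕ) (c : F) : Finset F[X] :=
  univ.image fun v : Fin n → F => C c * X ^ n + ((degreeLTEquiv F n).symm v : F[X])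

theorem mem_basedPolys {n : ℕ} {c : F} {f : F[X]} :
    f ∈ basedPolys n c ↔ f.natDegree ≤ n ∧ f.coeff n = c := by
  simp only [basedPolys, mem_image, mem_univ, true_and]
  constructor
  · rintro ⟨v, rfl⟩
    have hlow := mem_degreeLT.1 ((degreeLTEquiv F n).symm v).2
    refine ⟨natDegree_add_le_of_degree_le (natDegree_C_mul_X_pow_le c n)
      (natDegree_le_iff_degree_le.2 hlow.le), ?_⟩
    rw [coeff_add, coeff_C_mul_X_pow, if_pos rfl, coeff_eq_zero_of_degree_lt hlow, add_zero]
  · rintro ⟨hdeg, rfl⟩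
    have hlow : f - C (f.coeff n) * X ^ n ∈ degreeLT F n := by
      refine mem_degreeLT.2 ((degree_lt_iff_coeff_zero _ _).2 fun m hm => ?_)
      rw [coeff_sub, coeff_C_mul_X_pow]
      rcases hm.eq_or_lt with rfl | hlt
      · simp
      · rw [if_neg hlt.ne', coeff_eq_zero_of_natDegree_lt (hdeg.trans_lt hlt), sub_zero]
    exact ⟨degreeLTEquiv F n ⟨_, hlow⟩, by simp⟩

theorem card_basedPolys (n : ℕ) (c : F) : #(basedPolys n c) = Fintype.card F ^ n := by
  have hinj : Function.Injective
      fun v : Fin n → F => C c * X ^ n + ((degreeLTEquiv F n).symm v : F[X]) :=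
    fun v w hvw => (degreeLTEquiv F n).symm.injective (Subtype.ext (add_left_cancel hvw))
  rw [basedPolys, card_image_of_injective _ hinj, card_univ, Fintype.card_fun, Fintype.card_fin]

theorem mem_basedPolys_one {n : ℕ} {f : F[X]} :
    f ∈ basedPolys n 1 ↔ f.Monic ∧ f.natDegree = n := by
  rw [mem_basedPolys]
  constructor
  · rintro ⟨hdeg, hcoeff⟩
    have hn : f.natDegree = n := hdeg.antisymm (le_natDegree_of_ne_zero (by simp [hcoeff]))
    exact ⟨by rw [Monic, leadingCoeff, hn, hcoeff], hn⟩
  · rintro ⟨hmonic, rfl⟩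
    exact ⟨le_rfl, hmonic⟩

theorem zero_mem_basedPolys_iff {n : ℕ} {c : F} : (0 : F[X]) ∈ basedPolys n c ↔ c = 0 := by
  simp [mem_basedPolys, eq_comm]

theorem monic_mul_mem_basedPolys_iff {h t : F[X]} (hh : h.Monic) {n : ℕ} {c : F}
    (hc : c ≠ 0 → h.natDegree ≤ n) :
    h * t ∈ basedPolys n c ↔ t ∈ basedPolys (n - h.natDegree) c := by
  rcases eq_or_ne t 0 with rfl | ht
  · simp only [mul_zero, zero_mem_basedPolys_iff]
  rw [mem_basedPolys, mem_basedPolys, hh.natDegree_mul' ht]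
  by_cases hn : h.natDegree ≤ n
  · have hcoeff : t.natDegree ≤ n - h.natDegree →
        (h * t).coeff n = t.coeff (n - h.natDegree) := fun htn => by
      conv_lhs => rw [← Nat.add_sub_cancel' hn]
      rw [coeff_mul_add_eq_of_natDegree_le le_rfl htn, hh.coeff_natDegree, one_mul]
    exact ⟨fun ⟨hdeg, hc⟩ => ⟨by omega, hcoeff (by omega) ▸ hc⟩,
      fun ⟨hdeg, hc⟩ => ⟨by omega, hcoeff hdeg ▸ hc⟩⟩
  · have hc0 : c = 0 := not_not.1 (mt hc hn)
    refine iff_of_false (by omega) fun ⟨hdeg, hc⟩ => ht ?_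
    rw [Nat.sub_eq_zero_of_le (by omega)] at hdeg hc
    rw [eq_C_of_natDegree_eq_zero (Nat.le_zero.1 hdeg), hc, hc0, C_0]

variable {r : ℕ}

noncomputable def basedTuples (a : Fin r → ℕ) (p : Fin r → F) : Finset (Fin r → F[X]) :=
  Fintype.piFinset fun i => basedPolys (a i) (p i)

noncomputable def coprimeBasedTuples (a : Fin r → ℕ) (p : Fin r → F) :
    Finset (Fin r → F[X]) :=
  {s ∈ basedTuples a p | univ.gcd s = 1}

theorem coe_coprimeBasedTuples (a : Fin r → ℕ) (p : Fin r → F) :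
    (coprimeBasedTuples a p : Set (Fin r → F[X])) = {s |
      (∀ i, (s i).degree ≤ (a i : WithBot ℕ)) ∧ (∀ i, (s i).coeff (a i) = p i) ∧
        ∀ g : F[X], (∀ i, g ∣ s i) → IsUnit g} := by
  ext s
  simp [coprimeBasedTuples, basedTuples, mem_basedPolys, natDegree_le_iff_degree_le, forall_and,
    gcd_eq_one_iff_forall_isUnit, and_assoc]

theorem card_basedTuples (a : Fin r → ℕ) (p : Fin r → F) :
    #(basedTuples a p) = Fintype.card F ^ ∑ i, a i := by
  simp only [basedTuples, Fintype.card_piFinset, card_basedPolys, prod_pow_eq_pow_sum]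

theorem card_filter_gcd_eq {a : Fin r → ℕ} {p : Fin r → F} {h : F[X]} (hh : h.Monic)
    (hdeg : ∀ i, p i ≠ 0 → h.natDegree ≤ a i) :
    #{s ∈ basedTuples a p | univ.gcd s = h} =
      #(coprimeBasedTuples (fun i => a i - h.natDegree) p) := by
  have h0 : h ≠ 0 := hh.ne_zero
  have hmem (t : Fin r → F[X]) :
      (fun i => h * t i) ∈ basedTuples a p ↔
        t ∈ basedTuples (fun i => a i - h.natDegree) p := by
    simp only [basedTuples, Fintype.mem_piFinset]
    exact forall_congr' fun i => monic_mul_mem_basedPolys_iff hh (hdeg i)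
  have hgcd (t : Fin r → F[X]) : (univ.gcd fun i => h * t i) = h * univ.gcd t := by
    rw [Finset.gcd_mul_left, hh.normalize_eq_self]
  have hfactor {s : Fin r → F[X]} (hs : univ.gcd s = h) (i : Fin r) : h * (s i / h) = s i :=
    EuclideanDomain.mul_div_cancel' h0 (hs ▸ gcd_dvd (mem_univ i))
  refine card_nbij' (fun s i => s i / h) (fun t i => h * t i) ?_ ?_ ?_ ?_
  · intro s hs
    simp only [coe_filter, coprimeBasedTuples, Set.mem_ofPred_eq] at hs ⊢
    have hs' : s = fun i => h * (s i / h) := funext fun i => (hfactor hs.2 i).symm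
    rw [hs', hmem, hgcd] at hs
    exact ⟨hs.1, mul_eq_left₀ h0 |>.1 hs.2⟩
  · intro t ht
    simp only [coe_filter, coprimeBasedTuples, Set.mem_ofPred_eq] at ht ⊢
    rw [hmem, hgcd, ht.2, mul_one]
    exact ⟨ht.1, rfl⟩
  · intro s hs
    simp only [coe_filter, Set.mem_ofPred_eq] at hs
    exact funext (hfactor hs.2)
  · intro t _
    exact funext fun i => mul_div_cancel_left₀ (t i) h0

noncomputable def monicsUpTo (m : ℕ) : Finset F[X] :=
  (range (m + 1)).biUnion fun e => basedPolys e (1 : F)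

theorem gcd_mem_monicsUpTo {a : Fin r → ℕ} {p : Fin r → F} {m : ℕ}
    (hm : m ∈ a '' {i | p i ≠ 0}) {s : Fin r → F[X]} (hs : s ∈ basedTuples a p) :
    univ.gcd s ∈ monicsUpTo m := by
  obtain ⟨i, hi, rfl⟩ := hm
  have hsi := Fintype.mem_piFinset.1 hs i
  rw [mem_basedPolys] at hsi
  have hsi0 : s i ≠ 0 := fun h0 => hi (by rw [← hsi.2, h0, coeff_zero])
  have hgcd0 : univ.gcd s ≠ 0 := fun h0 => hsi0 (gcd_eq_zero_iff.1 h0 i (mem_univ i))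
  simp only [monicsUpTo, mem_biUnion, mem_range, Nat.lt_succ_iff, mem_basedPolys_one]
  refine ⟨_, (natDegree_le_of_dvd (gcd_dvd (mem_univ i)) hsi0).trans hsi.1, ?_, rfl⟩
  rw [← Finset.normalize_gcd]
  exact monic_normalize hgcd0

theorem pow_sum_eq_sum_card_coprimeBasedTuples {a : Fin r → ℕ} {p : Fin r → F} {m : ℕ}
    (hm : IsLeast (a '' {i | p i ≠ 0}) m) :
    Fintype.card F ^ ∑ i, a i =
      ∑ e ∈ range (m + 1), Fintype.card F ^ e * #(coprimeBasedTuples (fun i => a i - e) p) := by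
  have hdisj : (range (m + 1) : Set ℕ).PairwiseDisjoint fun e => basedPolys e (1 : F) :=
    fun e _ e' _ hne => disjoint_left.2 fun f hf hf' =>
      hne ((mem_basedPolys_one.1 hf).2.symm.trans (mem_basedPolys_one.1 hf').2)
  rw [← card_basedTuples, card_eq_sum_card_fiberwise fun s hs => gcd_mem_monicsUpTo hm.1 hs,
    monicsUpTo, sum_biUnion hdisj]
  refine sum_congr rfl fun e he => ?_
  have hfiber : ∀ h ∈ basedPolys e (1 : F),
      #{s ∈ basedTuples a p | univ.gcd s = h} = #(coprimeBasedTuples (fun i => a i - e) p) := by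
    intro h hh
    obtain ⟨hmonic, rfl⟩ := mem_basedPolys_one.1 hh
    exact card_filter_gcd_eq hmonic fun i hi =>
      (Nat.lt_succ_iff.1 (mem_range.1 he)).trans (hm.2 ⟨i, hi, rfl⟩)
  rw [sum_congr rfl hfiber, sum_const, card_basedPolys, smul_eq_mul]

theorem card_coprimeBasedTuples_add {a : Fin r → ℕ} {p : Fin r → F} (hp : p ≠ 0)
    (ha : ∀ i, p i ≠ 0 → 1 ≤ a i) :
    #(coprimeBasedTuples a p) + Fintype.card F * Fintype.card F ^ ∑ i, (a i - 1) =
      Fintype.card F ^ ∑ i, a i := by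
  obtain ⟨i₀, hi₀⟩ := Function.ne_iff.1 hp
  have hm := isLeast_csInf (⟨a i₀, i₀, hi₀, rfl⟩ : (a '' {i | p i ≠ 0}).Nonempty)
  set m := sInf (a '' {i | p i ≠ 0})
  obtain ⟨i₁, hi₁, ham⟩ := hm.1
  have hm1 : 1 ≤ m := ham ▸ ha i₁ hi₁
  have hm' : IsLeast ((fun i => a i - 1) '' {i | p i ≠ 0}) (m - 1) := by
    have hmono : Monotone fun k : ℕ => k - 1 := fun _ _ hkl => Nat.sub_le_sub_right hkl 1
    simpa only [Set.image_image] using hmono.map_isLeast hm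
  rw [pow_sum_eq_sum_card_coprimeBasedTuples hm, pow_sum_eq_sum_card_coprimeBasedTuples hm',
    Nat.sub_add_cancel hm1, sum_range_succ', mul_sum, add_comm]
  simp only [Nat.sub_sub, pow_zero, one_mul, Nat.sub_zero, pow_succ', mul_assoc, add_comm 1]

end BasedSections

open BasedSections in
theorem stmt_1_general (F : Type*) [Field F] [Fintype F] (q : ℕ) (hq : q = Fintype.card F)
    (r : ℕ) (a : Fin r → ℕ) (ha : ∀ i, 1 ≤ a i)
    (d : ℕ) (hd : d = ∑ i, a i)
    (p : Fin r → F) (hp : p ≠ 0) :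
    Set.ncard {s : Fin r → F[X] |
        (∀ i, (s i).degree ≤ ((a i : ℕ) : WithBot ℕ)) ∧
        (∀ i, (s i).coeff (a i) = p i) ∧
        (∀ g : F[X], (∀ i, g ∣ s i) → IsUnit g)} =
      q ^ d - q ^ (d - r + 1) := by
  classical
  subst hq hd
  have hsum : ∑ i, (a i - 1) = ∑ i, a i - r := by
    rw [sum_tsub_distrib _ fun i _ => ha i]
    simp
  have hcount := card_coprimeBasedTuples_add hp fun i _ => ha i
  rw [hsum, ← pow_succ'] at hcount
  rw [← coe_coprimeBasedTuples, Set.ncard_coe_finset]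
  omega

theorem stmt_1 (F : Type*) [Field F] [Fintype F] (q : ℕ) (hq : q = Fintype.card F)
    (r : ℕ) (hr : 1 ≤ r) (a : Fin r → ℕ) (ha : ∀ i, 1 ≤ a i)
    (d : ℕ) (hd : d = ∑ i, a i)
    (p : Fin r → F) (hp : p ≠ 0) :
    Set.ncard {s : Fin r → F[X] |
        (∀ i, (s i).degree ≤ ((a i : ℕ) : WithBot ℕ)) ∧
        (∀ i, (s i).coeff (a i) = p i) ∧
        (∀ g : F[X], (∀ i, g ∣ s i) → IsUnit g)} =
      q ^ d - q ^ (d - r + 1) :=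
  stmt_1_general F q hq r a ha d hd p hp
end

section
/- Let μ denote the polynomial Möbius function on monic polynomials in 𝔽[X]: μ(f) = (−1)^m if f is squarefree with m monic irreducible factors, and μ(f) = 0 if f is not squarefree. Then the sum of μ(f) over all monic polynomials f of degree 1 equals −q, and for every integer k ≥ 2, the sum of μ(f) over all monic polynomials f of degree k equals 0. -/
open Polynomial

open Classical in
/-- The polynomial Möbius function: `μ f = (-1)^m` if `f` is squarefree with `m`
(monic) irreducible factors, and `0` otherwise. -/
noncomputable def polyMu {F : Type*} [Field F] (f : F[X]) : ℤ :=
  if Squarefree f then (-1 : ℤ) ^ Multiset.card (UniqueFactorizationMonoid.factors f) else 0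

namespace PolyMuAux

open UniqueFactorizationMonoid Finset Classical

variable {F : Type*} [Field F] [Fintype F]

lemma finM (n : ℕ) : {f : F[X] | f.Monic ∧ f.natDegree = n}.Finite := by
  have : Finite {p : F[X] // p.Monic ∧ p.natDegree = n} :=
    Finite.of_equiv _ ((Polynomial.monicEquivDegreeLT n).trans
      (Polynomial.degreeLTEquiv F n).toEquiv).symm
  exact Set.finite_coe_iff.mp this

noncomputable def M (F : Type*) [Field F] [Fintype F] (n : ℕ) : Finset F[X] :=
  (finM n).toFinset

lemma mem_M {n : ℕ} {f : F[X]} : f ∈ M F n ↔ f.Monic ∧ f.natDegree = n := by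
  simp [M, Set.Finite.mem_toFinset]

lemma card_M (n : ℕ) : (M F n).card = Fintype.card F ^ n := by
  have e : ↑{f : F[X] | f.Monic ∧ f.natDegree = n} ≃ (Fin n → F) :=
    (Polynomial.monicEquivDegreeLT n).trans (Polynomial.degreeLTEquiv F n).toEquiv
  rw [M, ← Set.ncard_eq_toFinset_card _ (finM n), ← Nat.card_coe_set_eq,
    Nat.card_congr e]
  simp [Nat.card_eq_fintype_card]

lemma polyMu_one : polyMu (1 : F[X]) = 1 := by
  simp [polyMu, squarefree_one]

lemma card_factors_irreducible {P : F[X]} (hP : Irreducible P) :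
    Multiset.card (factors P) = 1 := by
  have h1 : normalizedFactors P = {normalize P} := normalizedFactors_irreducible hP
  have h2 : Multiset.card (normalizedFactors P) = Multiset.card (factors P) := by
    rw [normalizedFactors, Multiset.card_map]
  rw [← h2, h1]
  simp

lemma polyMu_mul_prime {d P : F[X]} (hd : d ≠ 0) (hP : Prime P)
    (hsq : Squarefree (d * P)) : polyMu (d * P) = - polyMu d := by
  have hd' : Squarefree d := hsq.squarefree_of_dvd (dvd_mul_right d P)
  have hcard : Multiset.card (factors (d * P))
      = Multiset.card (factors d) + 1 := by
    have h := factors_mul hd hP.ne_zero (α := F[X])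
    rw [Multiset.card_eq_card_of_rel h, Multiset.card_add,
      card_factors_irreducible hP.irreducible]
  rw [polyMu, polyMu, if_pos hsq, if_pos hd', hcard, pow_succ]
  ring

end PolyMuAux

namespace PolyMuAux

variable {F : Type*} [Field F] [Fintype F]

open Classical in
/-- The finset of monic divisors of `f`. -/
noncomputable def D (f : F[X]) : Finset F[X] :=
  ((Finset.range (f.natDegree + 1)).biUnion (M F)).filter (fun d => d ∣ f)

lemma mem_D {f d : F[X]} (hf : f ≠ 0) : d ∈ D f ↔ d.Monic ∧ d ∣ f := by
  classical
  simp only [D, Finset.mem_filter, Finset.mem_biUnion, Finset.mem_range, mem_M]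
  constructor
  · rintro ⟨⟨j, hj, hm, rfl⟩, hd⟩
    exact ⟨hm, hd⟩
  · rintro ⟨h1, h2⟩
    exact ⟨⟨d.natDegree, Nat.lt_succ_of_le (natDegree_le_of_dvd h2 hf), h1, rfl⟩, h2⟩

lemma polyMu_ne_zero {d : F[X]} (h : polyMu d ≠ 0) : Squarefree d := by
  by_contra hc
  simp [polyMu, hc] at h

lemma sum_D (f : F[X]) (hf : f.Monic) (hdeg : f.natDegree ≠ 0) :
    ∑ d ∈ D f, polyMu d = 0 := by
  classical
  have hf0 : f ≠ 0 := hf.ne_zero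
  have hfu : ¬ IsUnit f := fun h => hdeg (natDegree_eq_zero_of_isUnit h)
  obtain ⟨P0, hP0irr, hP0dvd⟩ := WfDvdMonoid.exists_irreducible_factor hfu hf0
  set P : F[X] := normalize P0 with hPdef
  have hPm : P.Monic := monic_normalize hP0irr.ne_zero
  have hPirr : Irreducible P := (associated_normalize P0).irreducible hP0irr
  have hPP : Prime P := hPirr.prime
  have hPdvd : P ∣ f := (normalize_dvd_iff).mpr hP0dvd
  have hP0' : P ≠ 0 := hPP.ne_zero
  have hPdeg : P.natDegree ≠ 0 := by
    intro h
    exact hPirr.not_isUnit (hPm.natDegree_eq_zero.mp h ▸ isUnit_one)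
  -- restrict to squarefree divisors
  rw [← Finset.sum_filter_of_ne (p := fun d => Squarefree d)
    (fun x _ hx => polyMu_ne_zero hx)]
  have hmem : ∀ d, d ∈ (D f).filter (fun d => Squarefree d) ↔
      (d.Monic ∧ d ∣ f) ∧ Squarefree d := by
    intro d; rw [Finset.mem_filter, mem_D hf0]
  refine Finset.sum_involution (fun d _ => if P ∣ d then d / P else d * P) ?_ ?_ ?_ ?_
  · -- values cancel
    intro d hd
    obtain ⟨⟨hdm, hddvd⟩, hdsq⟩ := (hmem d).mp hd
    have hd0 : d ≠ 0 := hdm.ne_zero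
    by_cases hPd : P ∣ d
    · simp only [if_pos hPd]
      have hmul : d / P * P = d := by
        rw [mul_comm]; exact EuclideanDomain.mul_div_cancel' hP0' hPd
      have hq0 : d / P ≠ 0 := by
        intro h; rw [h, zero_mul] at hmul; exact hd0 hmul.symm
      have h2 : polyMu (d / P * P) = - polyMu (d / P) :=
        polyMu_mul_prime hq0 hPP (by rw [hmul]; exact hdsq)
      rw [hmul] at h2
      rw [h2]; ring
    · simp only [if_neg hPd]
      have hsq : Squarefree (d * P) := squarefree_mul_iff.mpr
        ⟨(hPirr.isRelPrime_iff_not_dvd.mpr hPd).symm, hdsq, hPirr.squarefree⟩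
      rw [polyMu_mul_prime hd0 hPP hsq]; ring
  · -- no fixed points where value nonzero
    intro d hd hne
    obtain ⟨⟨hdm, hddvd⟩, hdsq⟩ := (hmem d).mp hd
    have hd0 : d ≠ 0 := hdm.ne_zero
    by_cases hPd : P ∣ d
    · simp only [if_pos hPd]
      intro h
      have hmul : d / P * P = d := by
        rw [mul_comm]; exact EuclideanDomain.mul_div_cancel' hP0' hPd
      rw [h] at hmul
      have := natDegree_mul hd0 hP0'
      rw [hmul] at this
      omega
    · simp only [if_neg hPd]
      intro h
      have := natDegree_mul hd0 hP0'
      rw [h] at this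
      omega
  · -- membership preserved
    intro d hd
    obtain ⟨⟨hdm, hddvd⟩, hdsq⟩ := (hmem d).mp hd
    have hd0 : d ≠ 0 := hdm.ne_zero
    rw [hmem]
    by_cases hPd : P ∣ d
    · simp only [if_pos hPd]
      have hmul : P * (d / P) = d := EuclideanDomain.mul_div_cancel' hP0' hPd
      refine ⟨⟨hPm.of_mul_monic_left (by rwa [hmul]), dvd_trans ⟨P, by rw [mul_comm, hmul]⟩ hddvd⟩,
        hdsq.squarefree_of_dvd ⟨P, by rw [mul_comm, hmul]⟩⟩
    · simp only [if_neg hPd]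
      obtain ⟨e, he⟩ := hddvd
      have hPe : P ∣ e := (hPP.dvd_or_dvd (he ▸ hPdvd)).resolve_left hPd
      obtain ⟨e', he'⟩ := hPe
      refine ⟨⟨hdm.mul hPm, ⟨e', by rw [he, he']; ring⟩⟩, squarefree_mul_iff.mpr
        ⟨(hPirr.isRelPrime_iff_not_dvd.mpr hPd).symm, hdsq, hPirr.squarefree⟩⟩
  · -- involutive
    intro d hd
    obtain ⟨⟨hdm, hddvd⟩, hdsq⟩ := (hmem d).mp hd
    have hd0 : d ≠ 0 := hdm.ne_zero
    by_cases hPd : P ∣ d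
    · simp only [if_pos hPd]
      have hnd : ¬ P ∣ d / P := by
        intro hc
        have hmul : P * (d / P) = d := EuclideanDomain.mul_div_cancel' hP0' hPd
        obtain ⟨c, hc'⟩ := hc
        have : P * P ∣ d := ⟨c, by rw [← hmul, hc']; ring⟩
        exact hPirr.not_isUnit (hdsq P this)
      simp only [if_neg hnd]
      rw [mul_comm]; exact EuclideanDomain.mul_div_cancel' hP0' hPd
    · simp only [if_neg hPd]
      rw [if_pos (dvd_mul_left P d)]
      exact mul_div_cancel_right₀ d hP0'

end PolyMuAux

namespace PolyMuAux

variable {F : Type*} [Field F] [Fintype F]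

lemma key (n : ℕ) (hn : 1 ≤ n) :
    ∑ j ∈ Finset.range (n + 1),
      (∑ d ∈ M F j, polyMu d) * (Fintype.card F : ℤ) ^ (n - j) = 0 := by
  classical
  have h1 : ∀ j ∈ Finset.range (n + 1),
      (∑ d ∈ M F j, polyMu d) * (Fintype.card F : ℤ) ^ (n - j)
      = ∑ p ∈ (M F j) ×ˢ (M F (n - j)), polyMu p.1 := by
    intro j _
    rw [Finset.sum_product, Finset.sum_mul]
    refine Finset.sum_congr rfl fun d _ => ?_
    simp only [Finset.sum_const, card_M, nsmul_eq_mul]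
    push_cast
    ring
  rw [Finset.sum_congr rfl h1, Finset.sum_sigma']
  have h2 : ∑ x ∈ (Finset.range (n + 1)).sigma (fun j => (M F j) ×ˢ (M F (n - j))),
      polyMu x.2.1
      = ∑ y ∈ (M F n).sigma (fun f => D f), polyMu y.2 := by
    refine Finset.sum_nbij' (fun x => ⟨x.2.1 * x.2.2, x.2.1⟩)
      (fun y => ⟨y.2.natDegree, (y.2, y.1 / y.2)⟩) ?_ ?_ ?_ ?_ ?_
    · rintro ⟨j, d, g⟩ hx
      simp only [Finset.mem_sigma, Finset.mem_range, Finset.mem_product, mem_M] at hx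
      obtain ⟨hj, ⟨hdm, hdd⟩, hgm, hgd⟩ := hx
      have hmon : (d * g).Monic := hdm.mul hgm
      have hdeg : (d * g).natDegree = n := by
        rw [natDegree_mul hdm.ne_zero hgm.ne_zero, hdd, hgd]
        omega
      simp only [Finset.mem_sigma, mem_M, mem_D hmon.ne_zero]
      exact ⟨⟨hmon, hdeg⟩, hdm, dvd_mul_right d g⟩
    · rintro ⟨f, d⟩ hy
      simp only [Finset.mem_sigma, mem_M] at hy
      obtain ⟨⟨hfm, hfd⟩, hd⟩ := hy
      rw [mem_D hfm.ne_zero] at hd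
      obtain ⟨hdm, hdd⟩ := hd
      have hmul : d * (f / d) = f := EuclideanDomain.mul_div_cancel' hdm.ne_zero hdd
      have hqm : (f / d).Monic := hdm.of_mul_monic_left (by rwa [hmul])
      have hdeg : (f / d).natDegree = n - d.natDegree := by
        have := natDegree_mul hdm.ne_zero hqm.ne_zero
        rw [hmul, hfd] at this
        omega
      simp only [Finset.mem_sigma, Finset.mem_range, Finset.mem_product, mem_M]
      exact ⟨Nat.lt_succ_of_le (hfd ▸ natDegree_le_of_dvd hdd hfm.ne_zero),
        ⟨hdm, trivial⟩, hqm, hdeg⟩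
    · rintro ⟨j, d, g⟩ hx
      simp only [Finset.mem_sigma, Finset.mem_range, Finset.mem_product, mem_M] at hx
      obtain ⟨hj, ⟨hdm, hdd⟩, hgm, hgd⟩ := hx
      have : d * g / d = g := by
        rw [mul_comm]; exact mul_div_cancel_right₀ g hdm.ne_zero
      simp only [Sigma.mk.inj_iff, heq_eq_eq, Prod.mk.injEq]
      exact ⟨hdd, trivial, this⟩
    · rintro ⟨f, d⟩ hy
      simp only [Finset.mem_sigma, mem_M] at hy
      obtain ⟨⟨hfm, hfd⟩, hd⟩ := hy
      rw [mem_D hfm.ne_zero] at hd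
      obtain ⟨hdm, hdd⟩ := hd
      have hmul : d * (f / d) = f := EuclideanDomain.mul_div_cancel' hdm.ne_zero hdd
      simp only [Sigma.mk.inj_iff, heq_eq_eq]
      exact ⟨hmul, trivial⟩
    · rintro ⟨j, d, g⟩ _
      rfl
  rw [h2, Finset.sum_sigma]
  refine Finset.sum_eq_zero fun f hf => ?_
  rw [mem_M] at hf
  exact sum_D f hf.1 (by omega)

end PolyMuAux

namespace PolyMuAux

variable {F : Type*} [Field F] [Fintype F]

lemma S0 : ∑ d ∈ M F 0, polyMu d = 1 := by
  have : M F 0 = {1} := by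
    ext f
    simp only [mem_M, Finset.mem_singleton]
    constructor
    · rintro ⟨hm, hd⟩; exact hm.natDegree_eq_zero.mp hd
    · rintro rfl; exact ⟨monic_one, natDegree_one⟩
  rw [this, Finset.sum_singleton, polyMu_one]

lemma S1 : ∑ d ∈ M F 1, polyMu d = -(Fintype.card F : ℤ) := by
  have h := key (F := F) 1 le_rfl
  rw [Finset.sum_range_succ, Finset.sum_range_succ, Finset.sum_range_zero, S0] at h
  norm_num at h
  linarith

lemma Sk (k : ℕ) (hk : 2 ≤ k) : ∑ d ∈ M F k, polyMu d = 0 := by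
  have h1 := key (F := F) k (by omega)
  have h2 := key (F := F) (k - 1) (by omega)
  rw [show k - 1 + 1 = k from by omega] at h2
  rw [Finset.sum_range_succ] at h1
  have h3 : ∑ j ∈ Finset.range k, (∑ d ∈ M F j, polyMu d) * (Fintype.card F : ℤ) ^ (k - j)
      = (∑ j ∈ Finset.range k,
          (∑ d ∈ M F j, polyMu d) * (Fintype.card F : ℤ) ^ (k - 1 - j)) * (Fintype.card F : ℤ) := by
    rw [Finset.sum_mul]
    refine Finset.sum_congr rfl fun j hj => ?_
    rw [Finset.mem_range] at hj
    rw [show k - j = (k - 1 - j) + 1 from by omega, pow_succ]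
    ring
  rw [h3, h2, Nat.sub_self, pow_zero, mul_one, zero_mul, zero_add] at h1
  exact h1

end PolyMuAux

theorem stmt_3 (F : Type*) [Field F] [Fintype F] (q : ℕ) (hq : q = Fintype.card F) :
    (∑ᶠ f ∈ {f : F[X] | f.Monic ∧ f.natDegree = 1}, polyMu f) = -(q : ℤ) ∧
    ∀ k : ℕ, 2 ≤ k →
      (∑ᶠ f ∈ {f : F[X] | f.Monic ∧ f.natDegree = k}, polyMu f) = 0 := by
  subst hq
  constructor
  · rw [finsum_mem_eq_finite_toFinset_sum _ (PolyMuAux.finM 1)]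
    exact PolyMuAux.S1
  · intro k hk
    rw [finsum_mem_eq_finite_toFinset_sum _ (PolyMuAux.finM k)]
    exact PolyMuAux.Sk k hk
end

section
/- For every integer d ≥ 1, the number of primitive triples in 𝒬_d equals q^{3d} − q^{3d−2}. -/
open Polynomial

/-- `Qset F d`: triples `(q₀, q₁, q₂)` of polynomials over `F` with `q₀` monic of degree `d`
and `q₁, q₂` of degree `< d`. -/
def Qset (F : Type*) [Field F] (d : ℕ) : Set (F[X] × F[X] × F[X]) :=
  {t | t.1.Monic ∧ t.1.natDegree = d ∧
    t.2.1.degree < (d : WithBot ℕ) ∧ t.2.2.degree < (d : WithBot ℕ)}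

/-- A triple is primitive if every common divisor of its three entries is a unit. -/
def Primitive {F : Type*} [Field F] (t : F[X] × F[X] × F[X]) : Prop :=
  ∀ g : F[X], g ∣ t.1 → g ∣ t.2.1 → g ∣ t.2.2 → IsUnit g

section Aux
variable {F : Type*} [Field F] [DecidableEq F]

noncomputable def G3 (t : F[X] × F[X] × F[X]) : F[X] := gcd t.1 (gcd t.2.1 t.2.2)

noncomputable def mulT (g : F[X]) (t : F[X] × F[X] × F[X]) : F[X] × F[X] × F[X] :=
  (g * t.1, g * t.2.1, g * t.2.2)

noncomputable def divT (g : F[X]) (t : F[X] × F[X] × F[X]) : F[X] × F[X] × F[X] :=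
  (t.1 / g, t.2.1 / g, t.2.2 / g)

lemma G3_dvd1 (t : F[X] × F[X] × F[X]) : G3 t ∣ t.1 := gcd_dvd_left _ _
lemma G3_dvd2 (t : F[X] × F[X] × F[X]) : G3 t ∣ t.2.1 :=
  (gcd_dvd_right _ _).trans (gcd_dvd_left _ _)
lemma G3_dvd3 (t : F[X] × F[X] × F[X]) : G3 t ∣ t.2.2 :=
  (gcd_dvd_right _ _).trans (gcd_dvd_right _ _)

lemma primitive_iff (t : F[X] × F[X] × F[X]) : Primitive t ↔ IsUnit (G3 t) := by
  constructor
  · intro h; exact h _ (G3_dvd1 t) (G3_dvd2 t) (G3_dvd3 t)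
  · intro h g h1 h2 h3
    exact isUnit_of_dvd_unit (dvd_gcd h1 (dvd_gcd h2 h3)) h

lemma G3_mulT {g : F[X]} (hg : g.Monic) (s : F[X] × F[X] × F[X]) :
    G3 (mulT g s) = g * G3 s := by
  unfold G3 mulT
  rw [gcd_mul_left, hg.normalize_eq_self, gcd_mul_left, hg.normalize_eq_self]

lemma div_mul_cancel_left' {g : F[X]} (hg : g ≠ 0) (a : F[X]) : (g * a) / g = a := by
  apply mul_left_cancel₀ hg
  exact EuclideanDomain.mul_div_cancel' hg (dvd_mul_right g a)

lemma divT_mulT {g : F[X]} (hg : g ≠ 0) (s : F[X] × F[X] × F[X]) :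
    divT g (mulT g s) = s := by
  unfold divT mulT
  simp only [div_mul_cancel_left' hg]

lemma mulT_divT {g : F[X]} {t : F[X] × F[X] × F[X]} (hg : g ≠ 0)
    (h1 : g ∣ t.1) (h2 : g ∣ t.2.1) (h3 : g ∣ t.2.2) :
    mulT g (divT g t) = t := by
  unfold mulT divT
  rw [EuclideanDomain.mul_div_cancel' hg h1, EuclideanDomain.mul_div_cancel' hg h2,
    EuclideanDomain.mul_div_cancel' hg h3]

lemma G3_props {t : F[X] × F[X] × F[X]} (ht : t.1.Monic) :
    (G3 t).Monic ∧ mulT (G3 t) (divT (G3 t) t) = t ∧ G3 (divT (G3 t) t) = 1 := by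
  have hne : G3 t ≠ 0 := by
    intro h
    have := G3_dvd1 t
    rw [h, zero_dvd_iff] at this
    exact ht.ne_zero this
  have hmonic : (G3 t).Monic := by
    have h := normalize_gcd t.1 (gcd t.2.1 t.2.2)
    have : (normalize (G3 t)).Monic := monic_normalize hne
    rwa [show normalize (G3 t) = G3 t from h] at this
  have hmd : mulT (G3 t) (divT (G3 t) t) = t :=
    mulT_divT hne (G3_dvd1 t) (G3_dvd2 t) (G3_dvd3 t)
  refine ⟨hmonic, hmd, ?_⟩
  have h2 : G3 t * G3 (divT (G3 t) t) = G3 t * 1 := by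
    rw [mul_one, ← G3_mulT hmonic, hmd]
  exact mul_left_cancel₀ hne h2

lemma mulT_mem_Qset {g : F[X]} (hg : g.Monic) {s : F[X] × F[X] × F[X]} {m : ℕ}
    (hs : s ∈ Qset F m) : mulT g s ∈ Qset F (g.natDegree + m) := by
  obtain ⟨hs1, hs2, hs3, hs4⟩ := hs
  have key : ∀ p : F[X], p.degree < (m : WithBot ℕ) →
      (g * p).degree < ((g.natDegree + m : ℕ) : WithBot ℕ) := by
    intro p hp
    rcases eq_or_ne p 0 with h0 | h0
    · rw [h0, mul_zero, degree_zero]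
      exact WithBot.bot_lt_coe _
    · have hpm : p.natDegree < m := (natDegree_lt_iff_degree_lt h0).2 hp
      have hprod : g * p ≠ 0 := mul_ne_zero hg.ne_zero h0
      rw [← natDegree_lt_iff_degree_lt hprod, natDegree_mul hg.ne_zero h0]
      omega
  refine ⟨hg.mul hs1, ?_, key _ hs3, key _ hs4⟩
  show (g * s.1).natDegree = g.natDegree + m
  rw [hg.natDegree_mul hs1, hs2]

lemma divT_mem_Qset {g : F[X]} (hg : g.Monic) {t : F[X] × F[X] × F[X]} {n : ℕ}
    (ht : t ∈ Qset F n) (h1 : g ∣ t.1) (h2 : g ∣ t.2.1) (h3 : g ∣ t.2.2) :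
    divT g t ∈ Qset F (n - g.natDegree) ∧ g.natDegree ≤ n := by
  obtain ⟨ht1, ht2, ht3, ht4⟩ := ht
  have hle : g.natDegree ≤ n := ht2 ▸ natDegree_le_of_dvd h1 ht1.ne_zero
  have heq1 : g * (t.1 / g) = t.1 := EuclideanDomain.mul_div_cancel' hg.ne_zero h1
  have hq1 : (t.1 / g).Monic := hg.of_mul_monic_left (heq1.symm ▸ ht1)
  have hd1 : (t.1 / g).natDegree = n - g.natDegree := by
    have h := hg.natDegree_mul hq1
    rw [heq1, ht2] at h
    omega
  have key : ∀ p : F[X], g ∣ p → p.degree < (n : WithBot ℕ) →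
      (p / g).degree < ((n - g.natDegree : ℕ) : WithBot ℕ) := by
    intro p hdvd hp
    rcases eq_or_ne p 0 with h0 | h0
    · rw [h0, EuclideanDomain.zero_div, degree_zero]
      exact WithBot.bot_lt_coe _
    · have heq : g * (p / g) = p := EuclideanDomain.mul_div_cancel' hg.ne_zero hdvd
      have hq0 : p / g ≠ 0 := by
        intro h
        rw [h, mul_zero] at heq
        exact h0 heq.symm
      have hpn : p.natDegree < n := (natDegree_lt_iff_degree_lt h0).2 hp
      have hsum : p.natDegree = g.natDegree + (p / g).natDegree := by
        conv_lhs => rw [← heq]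
        rw [natDegree_mul hg.ne_zero hq0]
      rw [← natDegree_lt_iff_degree_lt hq0]
      omega
  exact ⟨⟨hq1, hd1, key _ h2 ht3, key _ h3 ht4⟩, hle⟩

noncomputable def grow (c : F) (h : F[X]) : F[X] :=
  X ^ (h.natDegree + 1) + C c * X ^ h.natDegree + (h - X ^ h.natDegree)

noncomputable def shrink (g : F[X]) : F[X] :=
  X ^ (g.natDegree - 1) +
    (g - X ^ g.natDegree - C (g.coeff (g.natDegree - 1)) * X ^ (g.natDegree - 1))

lemma grow_monic {h : F[X]} (hh : h.Monic) (c : F) :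
    (grow c h).Monic ∧ (grow c h).natDegree = h.natDegree + 1 := by
  set f := h.natDegree with hf
  have hsub : (h - X ^ f).degree < (f : WithBot ℕ) := by
    have h1 : (h - X ^ f).degree < h.degree := by
      apply degree_sub_lt
      · rw [degree_X_pow, degree_eq_natDegree hh.ne_zero]
      · exact hh.ne_zero
      · rw [hh.leadingCoeff, leadingCoeff_X_pow]
    rwa [degree_eq_natDegree hh.ne_zero] at h1
  have hdeg : (C c * X ^ f + (h - X ^ f)).degree < ((f + 1 : ℕ) : WithBot ℕ) := by
    apply lt_of_le_of_lt (degree_add_le _ _)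
    apply max_lt
    · refine lt_of_le_of_lt (degree_C_mul_X_pow_le f c) ?_
      exact_mod_cast Nat.lt_succ_self f
    · refine lt_trans hsub ?_
      exact_mod_cast Nat.lt_succ_self f
  have hform : grow c h = X ^ (f + 1) + (C c * X ^ f + (h - X ^ f)) := by
    rw [grow]; ring
  constructor
  · rw [hform]; exact monic_X_pow_add hdeg
  · rw [hform]
    have hdeg2 : (C c * X ^ f + (h - X ^ f)).degree < (X ^ (f + 1) : F[X]).degree := by
      rwa [degree_X_pow]
    have := degree_add_eq_left_of_degree_lt hdeg2
    rw [degree_X_pow] at this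
    exact natDegree_eq_of_degree_eq_some this

lemma grow_coeff {h : F[X]} (hh : h.Monic) (c : F) :
    (grow c h).coeff h.natDegree = c := by
  have h1 : (X ^ (h.natDegree + 1) : F[X]).coeff h.natDegree = 0 := by
    rw [coeff_X_pow, if_neg (by omega)]
  have h2 : (C c * X ^ h.natDegree : F[X]).coeff h.natDegree = c := by
    rw [coeff_C_mul, coeff_X_pow, if_pos rfl, mul_one]
  have h3 : (h - X ^ h.natDegree).coeff h.natDegree = 0 := by
    rw [coeff_sub, coeff_X_pow, if_pos rfl, hh.coeff_natDegree, sub_self]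
  rw [grow, coeff_add, coeff_add, h1, h2, h3, zero_add, add_zero]

lemma shrink_grow {h : F[X]} (hh : h.Monic) (c : F) :
    shrink (grow c h) = h := by
  have hd := (grow_monic hh c).2
  rw [shrink, hd, Nat.add_sub_cancel, grow_coeff hh c]
  rw [grow]; ring

lemma shrink_monic {g : F[X]} (hg : g.Monic) (he : 1 ≤ g.natDegree) :
    (shrink g).Monic ∧ (shrink g).natDegree = g.natDegree - 1 := by
  set e := g.natDegree with hee
  set c := g.coeff (e - 1) with hc
  set r := g - X ^ e - C c * X ^ (e - 1) with hr
  have hrd : r.degree < ((e - 1 : ℕ) : WithBot ℕ) := by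
    rw [degree_lt_iff_coeff_zero]
    intro m hm
    rw [hr, coeff_sub, coeff_sub, coeff_C_mul, coeff_X_pow, coeff_X_pow]
    have hcases : m = e - 1 ∨ m = e ∨ e < m := by omega
    rcases hcases with h1 | h1 | h1
    · rw [if_neg (by omega), if_pos h1, h1, hc]
      ring
    · rw [if_pos h1, if_neg (by omega), h1, hg.coeff_natDegree]
      ring
    · rw [if_neg (by omega), if_neg (by omega),
        coeff_eq_zero_of_natDegree_lt h1]
      ring
  constructor
  · rw [shrink]; exact monic_X_pow_add hrd
  · rw [shrink]
    have hdeg2 : r.degree < (X ^ (e - 1) : F[X]).degree := by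
      rwa [degree_X_pow]
    have h := degree_add_eq_left_of_degree_lt hdeg2
    rw [degree_X_pow] at h
    exact natDegree_eq_of_degree_eq_some h

lemma grow_shrink {g : F[X]} (hg : g.Monic) (he : 1 ≤ g.natDegree) :
    grow (g.coeff (g.natDegree - 1)) (shrink g) = g := by
  have hd := (shrink_monic hg he).2
  rw [grow, hd]
  have h1 : g.natDegree - 1 + 1 = g.natDegree := by omega
  rw [h1, shrink]
  ring

end Aux

section Count
variable {F : Type*} [Field F] [Fintype F] [DecidableEq F]

def Lset (F : Type*) [Field F] (n : ℕ) : Set F[X] := {p | p.degree < (n : WithBot ℕ)}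

lemma Lset_eq (n : ℕ) : Lset F n = ↑(degreeLT F n) := by
  ext p
  exact mem_degreeLT.symm

noncomputable def LsetEquiv (n : ℕ) : ↥(Lset F n) ≃ (Fin n → F) :=
  (Equiv.setCongr (Lset_eq n)).trans (degreeLTEquiv F n).toEquiv

lemma Lset_finite (n : ℕ) : (Lset F n).Finite :=
  Set.finite_coe_iff.mp (Finite.of_equiv _ (LsetEquiv n).symm)

lemma ncard_Lset (n : ℕ) : (Lset F n).ncard = Fintype.card F ^ n := by
  rw [← Nat.card_coe_set_eq, Nat.card_congr (LsetEquiv n),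
    Nat.card_eq_fintype_card, Fintype.card_fun, Fintype.card_fin]

def Mset (F : Type*) [Field F] (n : ℕ) : Set F[X] := {p | p.Monic ∧ p.natDegree = n}

lemma Mset_eq_image (n : ℕ) :
    Mset F n = (fun r : F[X] => r + X ^ n) '' Lset F n := by
  ext p
  constructor
  · rintro ⟨hm, hd⟩
    refine ⟨p - X ^ n, ?_, by ring⟩
    show (p - X ^ n).degree < (n : WithBot ℕ)
    have h := degree_sub_lt
      (by rw [degree_X_pow, degree_eq_natDegree hm.ne_zero, hd]) hm.ne_zero
      (by rw [hm.leadingCoeff, leadingCoeff_X_pow])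
    rwa [degree_eq_natDegree hm.ne_zero, hd] at h
  · rintro ⟨r, hr, rfl⟩
    have hr' : r.degree < ((n : ℕ) : WithBot ℕ) := hr
    refine ⟨?_, ?_⟩
    · show (r + X ^ n).Monic
      rw [add_comm]
      exact monic_X_pow_add hr'
    · show (r + X ^ n).natDegree = n
      have h : (r + X ^ n).degree = ((n : ℕ) : WithBot ℕ) := by
        rw [add_comm]
        rw [degree_add_eq_left_of_degree_lt (by rwa [degree_X_pow]), degree_X_pow]
      exact natDegree_eq_of_degree_eq_some h

lemma Mset_finite (n : ℕ) : (Mset F n).Finite := by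
  rw [Mset_eq_image]
  exact (Lset_finite n).image _

lemma ncard_Mset (n : ℕ) : (Mset F n).ncard = Fintype.card F ^ n := by
  have hinj : Function.Injective (fun r : F[X] => r + X ^ n) := by
    intro a b hab
    have h := congrArg (· - (X ^ n : F[X])) hab
    simpa only [add_sub_cancel_right] using h
  rw [Mset_eq_image, Set.ncard_image_of_injective _ hinj, ncard_Lset]

lemma ncard_prod' {α β : Type*} (s : Set α) (t : Set β) :
    (s ×ˢ t).ncard = s.ncard * t.ncard := by
  rw [← Nat.card_coe_set_eq, Nat.card_congr (Equiv.Set.prod s t), Nat.card_prod,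
    Nat.card_coe_set_eq, Nat.card_coe_set_eq]

lemma Qset_eq_prod (n : ℕ) : Qset F n = Mset F n ×ˢ Lset F n ×ˢ Lset F n := by
  ext t
  simp only [Qset, Mset, Lset, Set.mem_prod, Set.mem_setOf_eq]
  tauto

lemma Qset_finite (n : ℕ) : (Qset F n).Finite := by
  rw [Qset_eq_prod]
  exact (Mset_finite n).prod ((Lset_finite n).prod (Lset_finite n))

lemma ncard_Qset (n : ℕ) : (Qset F n).ncard = Fintype.card F ^ (3 * n) := by
  rw [Qset_eq_prod, ncard_prod', ncard_prod', ncard_Mset, ncard_Lset]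
  rw [← pow_add, ← pow_add]
  congr 1
  omega

noncomputable def psiMap (t : F[X] × F[X] × F[X]) : F × (F[X] × F[X] × F[X]) :=
  ((G3 t).coeff ((G3 t).natDegree - 1), mulT (shrink (G3 t)) (divT (G3 t) t))

noncomputable def phiMap (p : F × (F[X] × F[X] × F[X])) : F[X] × F[X] × F[X] :=
  mulT (grow p.1 (G3 p.2)) (divT (G3 p.2) p.2)

lemma forward {d : ℕ} (hd : 1 ≤ d) {t : F[X] × F[X] × F[X]}
    (ht : t ∈ Qset F d) (hnp : ¬ Primitive t) :
    psiMap t ∈ (Set.univ : Set F) ×ˢ Qset F (d - 1) ∧ phiMap (psiMap t) = t := by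
  obtain ⟨hgm, hmd, hG1⟩ := G3_props ht.1
  have hnu : ¬ IsUnit (G3 t) := fun h => hnp ((primitive_iff t).2 h)
  have he : 1 ≤ (G3 t).natDegree := by
    by_contra h
    push_neg at h
    have h0 : (G3 t).natDegree = 0 := by omega
    exact hnu (by rw [eq_one_of_monic_natDegree_zero hgm h0]; exact isUnit_one)
  obtain ⟨hsQ, hle⟩ := divT_mem_Qset hgm ht (G3_dvd1 t) (G3_dvd2 t) (G3_dvd3 t)
  obtain ⟨hshm, hshd⟩ := shrink_monic hgm he
  have hmem := mulT_mem_Qset hshm hsQ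
  rw [hshd] at hmem
  have harith : (G3 t).natDegree - 1 + (d - (G3 t).natDegree) = d - 1 := by omega
  rw [harith] at hmem
  have hG3u : G3 (mulT (shrink (G3 t)) (divT (G3 t) t)) = shrink (G3 t) := by
    rw [G3_mulT hshm, hG1, mul_one]
  constructor
  · exact ⟨Set.mem_univ _, hmem⟩
  · simp only [psiMap, phiMap]
    rw [hG3u, divT_mulT hshm.ne_zero, grow_shrink hgm he]
    exact hmd

lemma backward {d : ℕ} (hd : 1 ≤ d) {c : F} {u : F[X] × F[X] × F[X]}
    (hu : u ∈ Qset F (d - 1)) :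
    phiMap (c, u) ∈ Qset F d ∧ ¬ Primitive (phiMap (c, u)) ∧
      psiMap (phiMap (c, u)) = (c, u) := by
  obtain ⟨hhm, hmd, hG1⟩ := G3_props hu.1
  obtain ⟨hsQ, hle⟩ := divT_mem_Qset hhm hu (G3_dvd1 u) (G3_dvd2 u) (G3_dvd3 u)
  obtain ⟨hgm, hgd⟩ := grow_monic hhm c
  simp only [phiMap]
  have hmem := mulT_mem_Qset hgm hsQ
  rw [hgd] at hmem
  have harith : (G3 u).natDegree + 1 + (d - 1 - (G3 u).natDegree) = d := by omega
  rw [harith] at hmem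
  have hG3t : G3 (mulT (grow c (G3 u)) (divT (G3 u) u)) = grow c (G3 u) := by
    rw [G3_mulT hgm, hG1, mul_one]
  refine ⟨hmem, ?_, ?_⟩
  · intro hp
    have hu' := (primitive_iff _).1 hp
    rw [hG3t] at hu'
    exact not_isUnit_of_natDegree_pos _ (by rw [hgd]; omega) hu'
  · simp only [psiMap]
    rw [hG3t, hgd, Nat.add_sub_cancel, grow_coeff hhm, shrink_grow hhm,
      divT_mulT hgm.ne_zero, hmd]

lemma ncard_nonprim (d : ℕ) (hd : 1 ≤ d) :
    {t : F[X] × F[X] × F[X] | t ∈ Qset F d ∧ ¬ Primitive t}.ncard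
      = Fintype.card F ^ (3 * d - 2) := by
  set N : Set (F[X] × F[X] × F[X]) := {t | t ∈ Qset F d ∧ ¬ Primitive t} with hN
  have hbij : Set.BijOn psiMap N ((Set.univ : Set F) ×ˢ Qset F (d - 1)) := by
    refine ⟨fun t ht => (forward hd ht.1 ht.2).1, fun a ha b hb hab => ?_, fun p hp => ?_⟩
    · rw [← (forward hd ha.1 ha.2).2, ← (forward hd hb.1 hb.2).2, hab]
    · obtain ⟨h1, h2, h3⟩ := backward hd (c := p.1) (u := p.2) hp.2
      exact ⟨phiMap (p.1, p.2), ⟨h1, h2⟩, by rw [h3]⟩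
  calc N.ncard = (psiMap '' N).ncard := (Set.ncard_image_of_injOn hbij.injOn).symm
    _ = ((Set.univ : Set F) ×ˢ Qset F (d - 1)).ncard := by rw [hbij.image_eq]
    _ = Fintype.card F * Fintype.card F ^ (3 * (d - 1)) := by
        rw [ncard_prod', Set.ncard_univ, Nat.card_eq_fintype_card, ncard_Qset]
    _ = Fintype.card F ^ (3 * d - 2) := by
        rw [← pow_succ']
        congr 1
        omega

end Count

theorem stmt_4 (F : Type*) [Field F] [Fintype F] (q : ℕ) (hq : q = Fintype.card F)
    (d : ℕ) (hd : 1 ≤ d) :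
    Set.ncard {t : F[X] × F[X] × F[X] | t ∈ Qset F d ∧ Primitive t} =
      q ^ (3 * d) - q ^ (3 * d - 2) := by
  letI : DecidableEq F := Classical.decEq F
  subst hq
  have hset : {t : F[X] × F[X] × F[X] | t ∈ Qset F d ∧ Primitive t}
      = Qset F d \ {t : F[X] × F[X] × F[X] | t ∈ Qset F d ∧ ¬ Primitive t} := by
    ext t
    simp only [Set.mem_setOf_eq, Set.mem_diff]
    tauto
  have hsub : {t : F[X] × F[X] × F[X] | t ∈ Qset F d ∧ ¬ Primitive t} ⊆ Qset F d :=
    fun t ht => ht.1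
  rw [hset, Set.ncard_diff hsub ((Qset_finite d).subset hsub), ncard_Qset, ncard_nonprim d hd]
end

section
/- Let d_b ≥ d_a ≥ 1 be integers and let Q = (q₀, q₁, q₂) ∈ 𝒬_{d_a} be fixed, with δ = deg gcd(q₀, q₁, q₂). Then the number of triples R = (r₀, r₁, r₂) ∈ ℛ_{d_b} satisfying q₀r₀ + q₁r₁ + q₂r₂ = 0 equals q^{2d_b − d_a + δ}. -/
/-!
Dividing `Q` by `G = gcd(q₀, q₁, q₂)` does not change the equation and leaves a triple
`(a₀, a₁, a₂)` with `a₀` monic of degree `m = d_a - δ` and trivial gcd. Writing `r₂ = X ^ d_b + s`,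
a solution is determined by `(r₁, s) ∈ 𝔽[X]_{<d_b} × 𝔽[X]_{<d_b}` subject to
`a₀ ∣ a₁ r₁ + a₂ (s + X ^ d_b)`: this divisibility forces `r₀`, and a degree count gives
`deg r₀ < d_b`. So the solutions form a fibre of the `𝔽`-linear map `(r₁, s) ↦ a₁ r₁ + a₂ s`
to `𝔽[X]/(a₀)`, which has dimension `m`. The map is onto because `a₁, a₂` generate the unit ideal
modulo `a₀` and every residue has a representative of degree `< m ≤ d_b`, so the fibre has
`q ^ (2 d_b - m)` elements.
-/

open Polynomial

/-- `Rset F d`: triples `(r₀, r₁, r₂)` of polynomials over `F` with `r₂` monic of degree `d`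
and `r₀, r₁` of degree `< d`. -/
def Rset (F : Type*) [Field F] (d : ℕ) : Set (F[X] × F[X] × F[X]) :=
  {t | t.2.2.Monic ∧ t.2.2.natDegree = d ∧
    t.1.degree < (d : WithBot ℕ) ∧ t.2.1.degree < (d : WithBot ℕ)}

/-- A pair `(Q, R)` is intersecting if `q₀r₀ + q₁r₁ + q₂r₂ = 0`. -/
def Intersecting {F : Type*} [Field F] (Q R : F[X] × F[X] × F[X]) : Prop :=
  Q.1 * R.1 + Q.2.1 * R.2.1 + Q.2.2 * R.2.2 = 0

theorem LinearMap.natCard_preimage_singleton_of_surjective {K V W : Type*} [DivisionRing K]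
    [AddCommGroup V] [Module K V] [AddCommGroup W] [Module K W] [FiniteDimensional K V]
    {T : V →ₗ[K] W} (hT : Function.Surjective T) (c : W) :
    Nat.card (T ⁻¹' {c}) = Nat.card K ^ (Module.finrank K V - Module.finrank K W) := by
  have hrank := T.finrank_range_add_finrank_ker
  rw [LinearMap.range_eq_top.mpr hT, finrank_top] at hrank
  rw [← hrank, Nat.add_sub_cancel_left, ← Module.natCard_eq_pow_finrank]
  exact Nat.card_congr (T.toAddMonoidHom.fiberEquivKerOfSurjective hT c)

theorem extract_gcd₃ {α : Type*} [CommMonoidWithZero α] [StrongNormalizedGCDMonoid α]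
    (a b c : α) (h : gcd a (gcd b c) ≠ 0) :
    ∃ a' b' c', a = gcd a (gcd b c) * a' ∧ b = gcd a (gcd b c) * b' ∧
      c = gcd a (gcd b c) * c' ∧ gcd a' (gcd b' c') = 1 := by
  obtain ⟨a', ha⟩ := gcd_dvd_left a (gcd b c)
  obtain ⟨b', hb⟩ := (gcd_dvd_right a (gcd b c)).trans (gcd_dvd_left b c)
  obtain ⟨c', hc⟩ := (gcd_dvd_right a (gcd b c)).trans (gcd_dvd_right b c)
  refine ⟨a', b', c', ha, hb, hc, mul_left_cancel₀ h ?_⟩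
  set G := gcd a (gcd b c)
  have hG : normalize G = G := normalize_gcd a (gcd b c)
  calc G * gcd a' (gcd b' c') = gcd (G * a') (gcd (G * b') (G * c')) := by
        rw [gcd_mul_left G b' c', hG, gcd_mul_left, hG]
    _ = G * 1 := by rw [← ha, ← hb, ← hc, mul_one]

namespace Polynomial

variable {R : Type*}

theorem degree_lt_of_degree_mul_lt [Semiring R] [NoZeroDivisors R] {p r : R[X]} {n : ℕ}
    (hp : p ≠ 0) (h : (p * r).degree < ↑(p.natDegree + n)) : r.degree < n := by
  rw [degree_mul, degree_eq_natDegree hp, Nat.cast_add] at h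
  exact (WithBot.add_lt_add_iff_left (WithBot.natCast_ne_bot _)).mp h

theorem degree_mul_lt_of_lt_of_le [Semiring R] {p r : R[X]} {a b : ℕ} (hp : p.degree < a)
    (hr : r.degree ≤ b) : (p * r).degree < ↑(a + b) := by
  rcases eq_or_ne r 0 with rfl | hr0
  · simp
  rw [Nat.cast_add]
  exact (degree_mul_le p r).trans_lt
    (WithBot.add_lt_add_of_lt_of_le (degree_eq_bot.not.2 hr0) hp hr)

theorem sub_X_pow_mem_degreeLT_iff [Ring R] [Nontrivial R] {p : R[X]} {n : ℕ} :
    p - X ^ n ∈ degreeLT R n ↔ p.Monic ∧ p.natDegree = n := by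
  rw [mem_degreeLT]
  constructor
  · intro h
    have hlt : (p - X ^ n).degree < (X ^ n : R[X]).degree := by rwa [degree_X_pow]
    rw [← add_sub_cancel (X ^ n) p]
    exact ⟨monic_X_pow_add h, by rw [natDegree_add_eq_left_of_degree_lt hlt, natDegree_X_pow]⟩
  · rintro ⟨hmon, hdeg⟩
    have hdeg' : p.degree = n := by rw [degree_eq_natDegree hmon.ne_zero, hdeg]
    rw [← hdeg']
    exact degree_sub_lt_left (by rw [hdeg', degree_X_pow]) hmon.ne_zero
      (by rw [hmon.leadingCoeff, leadingCoeff_X_pow])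

theorem finrank_degreeLT [Ring R] [StrongRankCondition R] (n : ℕ) :
    Module.finrank R (degreeLT R n) = n := by
  rw [Module.finrank_eq_card_basis (degreeLT.basis R n), Fintype.card_fin]

end Polynomial

theorem AdjoinRoot.exists_mem_degreeLT_mk_eq {R : Type*} [CommRing R] [Nontrivial R] {g : R[X]}
    (hg : g.Monic) {n : ℕ} (hn : g.natDegree ≤ n) (y : AdjoinRoot g) :
    ∃ p ∈ degreeLT R n, mk g p = y := by
  refine ⟨AdjoinRoot.modByMonicHom hg y, mem_degreeLT.2 ?_, AdjoinRoot.mk_leftInverse hg y⟩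
  induction y using AdjoinRoot.induction_on with | ih p => ?_
  rw [AdjoinRoot.modByMonicHom_mk]
  exact (degree_modByMonic_lt p hg).trans_le (degree_le_natDegree.trans (by exact_mod_cast hn))

section Counting

variable {F : Type*} [Field F]

theorem intersecting_mul_left_iff {G : F[X]} (hG : G ≠ 0) {a b c : F[X]}
    {R : F[X] × F[X] × F[X]} :
    Intersecting (G * a, G * b, G * c) R ↔ Intersecting (a, b, c) R := by
  have hfactor : G * a * R.1 + G * b * R.2.1 + G * c * R.2.2 =
      G * (a * R.1 + b * R.2.1 + c * R.2.2) := by ring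
  simp only [Intersecting, mul_assoc] at hfactor ⊢
  rw [hfactor, mul_eq_zero, or_iff_right hG]

theorem mem_Qset_of_eq_mul {Q A : F[X] × F[X] × F[X]} {d : ℕ} (hQ : Q ∈ Qset F d) {G : F[X]}
    (hG : G.Monic) (hQA : Q = (G * A.1, G * A.2.1, G * A.2.2)) :
    A ∈ Qset F (d - G.natDegree) := by
  obtain ⟨hmon, hdeg, hdeg₁, hdeg₂⟩ := hQ
  rw [hQA] at hmon hdeg hdeg₁ hdeg₂
  have hA₁ : A.1.Monic := hG.of_mul_monic_left hmon
  have hd : d = G.natDegree + A.1.natDegree := by rw [← hdeg, hG.natDegree_mul hA₁]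
  rw [hd] at hdeg₁ hdeg₂
  rw [hd, Nat.add_sub_cancel_left]
  exact ⟨hA₁, rfl, degree_lt_of_degree_mul_lt hG.ne_zero hdeg₁,
    degree_lt_of_degree_mul_lt hG.ne_zero hdeg₂⟩

theorem degree_lt_of_intersecting {A R : F[X] × F[X] × F[X]} {m n : ℕ} (hA : A ∈ Qset F m)
    (hR₁ : R.2.1.degree < n) (hR₂ : R.2.2.degree ≤ n) (h : Intersecting A R) :
    R.1.degree < n := by
  obtain ⟨hmon, hdeg, hdeg₁, hdeg₂⟩ := hA
  refine degree_lt_of_degree_mul_lt hmon.ne_zero ?_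
  unfold Intersecting at h
  rw [show A.1 * R.1 = -(A.2.1 * R.2.1 + A.2.2 * R.2.2) by linear_combination h, degree_neg, hdeg]
  exact (degree_add_le _ _).trans_lt (max_lt (degree_mul_lt_of_lt_of_le hdeg₁ hR₁.le)
    (degree_mul_lt_of_lt_of_le hdeg₂ hR₂))

noncomputable def residueMap (A : F[X] × F[X] × F[X]) (n : ℕ) :
    degreeLT F n × degreeLT F n →ₗ[F] AdjoinRoot A.1 :=
  (AdjoinRoot.mkₐ A.1).toLinearMap ∘ₗ
    (LinearMap.mulLeft F A.2.1 ∘ₗ (degreeLT F n).subtype ∘ₗ LinearMap.fst F _ _ +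
      LinearMap.mulLeft F A.2.2 ∘ₗ (degreeLT F n).subtype ∘ₗ LinearMap.snd F _ _)

theorem residueMap_apply (A : F[X] × F[X] × F[X]) (n : ℕ) (x : degreeLT F n × degreeLT F n) :
    residueMap A n x = AdjoinRoot.mk A.1 (A.2.1 * (x.1 : F[X]) + A.2.2 * (x.2 : F[X])) :=
  rfl

theorem residueMap_eq_neg_mk_iff {A : F[X] × F[X] × F[X]} {n : ℕ}
    (x : degreeLT F n × degreeLT F n) :
    residueMap A n x = -AdjoinRoot.mk A.1 (A.2.2 * X ^ n) ↔
      A.1 ∣ A.2.1 * (x.1 : F[X]) + A.2.2 * ((x.2 : F[X]) + X ^ n) := by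
  rw [residueMap_apply, eq_neg_iff_add_eq_zero, ← map_add, AdjoinRoot.mk_eq_zero, mul_add,
    add_assoc]

theorem residueMap_surjective [DecidableEq F] {A : F[X] × F[X] × F[X]} {n : ℕ}
    (hA₀ : A.1.Monic) (hn : A.1.natDegree ≤ n) (hA : IsCoprime A.1 (gcd A.2.1 A.2.2)) :
    Function.Surjective (residueMap A n) := by
  obtain ⟨u, v, huv⟩ := hA
  obtain ⟨x₁, x₂, hx⟩ := exists_gcd_eq_mul_add_mul A.2.1 A.2.2
  have hunit : AdjoinRoot.mk A.1 (v * (A.2.1 * x₁ + A.2.2 * x₂)) = 1 := by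
    rw [← hx, ← map_one (AdjoinRoot.mk A.1), AdjoinRoot.mk_eq_mk]
    exact ⟨-u, by linear_combination huv⟩
  intro y
  obtain ⟨p₁, hp₁, hy₁⟩ :=
    AdjoinRoot.exists_mem_degreeLT_mk_eq hA₀ hn (y * AdjoinRoot.mk A.1 (v * x₁))
  obtain ⟨p₂, hp₂, hy₂⟩ :=
    AdjoinRoot.exists_mem_degreeLT_mk_eq hA₀ hn (y * AdjoinRoot.mk A.1 (v * x₂))
  refine ⟨(⟨p₁, hp₁⟩, ⟨p₂, hp₂⟩), ?_⟩
  rw [residueMap_apply, map_add, map_mul, map_mul, hy₁, hy₂]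
  simp only [map_mul, map_add] at hunit ⊢
  linear_combination y * hunit

theorem ncard_solutions_eq_ncard_preimage {A : F[X] × F[X] × F[X]} {m n : ℕ}
    (hA : A ∈ Qset F m) :
    {R | R ∈ Rset F n ∧ Intersecting A R}.ncard =
      (residueMap A n ⁻¹' {-AdjoinRoot.mk A.1 (A.2.2 * X ^ n)}).ncard := by
  refine Set.ncard_congr (fun R hR => (⟨R.2.1, mem_degreeLT.2 hR.1.2.2.2⟩,
    ⟨R.2.2 - X ^ n, sub_X_pow_mem_degreeLT_iff.2 ⟨hR.1.1, hR.1.2.1⟩⟩)) ?_ ?_ ?_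
  · rintro R ⟨-, hR⟩
    rw [Set.mem_preimage, Set.mem_singleton_iff, residueMap_eq_neg_mk_iff]
    unfold Intersecting at hR
    exact ⟨-R.1, by linear_combination hR⟩
  · rintro ⟨R₀, R₁, R₂⟩ ⟨S₀, S₁, S₂⟩ ⟨_, hR⟩ ⟨_, hS⟩ h
    simp only [Prod.mk.injEq, Subtype.mk.injEq, sub_left_inj] at h
    obtain ⟨rfl, rfl⟩ := h
    unfold Intersecting at hR hS
    have h₀ : A.1 * R₀ = A.1 * S₀ := by linear_combination hR - hS
    rw [mul_right_inj' hA.1.ne_zero] at h₀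
    rw [h₀]
  · rintro ⟨x₁, x₂⟩ hx
    obtain ⟨k, hk⟩ := (residueMap_eq_neg_mk_iff _).1 hx
    have hR₂ := sub_X_pow_mem_degreeLT_iff.1
      (show (x₂ : F[X]) + X ^ n - X ^ n ∈ degreeLT F n by rw [add_sub_cancel_right]; exact x₂.2)
    have hint : Intersecting A (-k, x₁, (x₂ : F[X]) + X ^ n) := by
      unfold Intersecting; linear_combination hk
    have hR₀ : (-k).degree < n := degree_lt_of_intersecting hA (mem_degreeLT.1 x₁.2)
      (degree_le_of_natDegree_le hR₂.2.le) hint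
    exact ⟨(-k, x₁, (x₂ : F[X]) + X ^ n), ⟨⟨hR₂.1, hR₂.2, hR₀, mem_degreeLT.1 x₁.2⟩, hint⟩,
      by simp⟩

theorem ncard_solutions_of_isCoprime [DecidableEq F] {A : F[X] × F[X] × F[X]} {m n : ℕ}
    (hA : A ∈ Qset F m) (hmn : m ≤ n) (hcop : IsCoprime A.1 (gcd A.2.1 A.2.2)) :
    {R | R ∈ Rset F n ∧ Intersecting A R}.ncard = Nat.card F ^ (2 * n - m) := by
  rw [ncard_solutions_eq_ncard_preimage hA, ← Nat.card_coe_set_eq,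
    LinearMap.natCard_preimage_singleton_of_surjective
      (residueMap_surjective hA.1 (hA.2.1 ▸ hmn) hcop),
    Module.finrank_prod, finrank_degreeLT, (AdjoinRoot.powerBasis hA.1.ne_zero).finrank,
    AdjoinRoot.powerBasis_dim, hA.2.1, two_mul]

end Counting

theorem stmt_6_general (F : Type*) [Field F] [Fintype F] [DecidableEq F] (q : ℕ) (hq : q = Fintype.card F)
    (da db : ℕ) (h2 : da ≤ db)
    (Q : F[X] × F[X] × F[X]) (hQ : Q ∈ Qset F da)
    (δ : ℕ) (hδ : δ = (gcd Q.1 (gcd Q.2.1 Q.2.2)).natDegree) :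
    Set.ncard {R : F[X] × F[X] × F[X] | R ∈ Rset F db ∧ Intersecting Q R} =
      q ^ (2 * db - da + δ) := by
  subst hq hδ
  set G := gcd Q.1 (gcd Q.2.1 Q.2.2)
  have hG₀ : G ≠ 0 := gcd_ne_zero_of_left hQ.1.ne_zero
  have hG : G.Monic := by simpa only [G, normalize_gcd] using monic_normalize hG₀
  have hGQ : G.natDegree ≤ da := hQ.2.1 ▸ natDegree_le_of_dvd (gcd_dvd_left _ _) hQ.1.ne_zero
  obtain ⟨a, b, c, ha, hb, hc, hgcd⟩ := extract_gcd₃ Q.1 Q.2.1 Q.2.2 hG₀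
  have hQA : Q = (G * a, G * b, G * c) := Prod.ext ha (Prod.ext hb hc)
  have hA : (a, b, c) ∈ Qset F (da - G.natDegree) := mem_Qset_of_eq_mul hQ hG hQA
  have hcop : IsCoprime a (gcd b c) := (gcd_isUnit_iff a (gcd b c)).mp (hgcd ▸ isUnit_one)
  have hsol : {R | R ∈ Rset F db ∧ Intersecting Q R} =
      {R | R ∈ Rset F db ∧ Intersecting (a, b, c) R} := by
    rw [hQA]
    simp only [intersecting_mul_left_iff hG₀]
  rw [hsol, ncard_solutions_of_isCoprime hA (by omega) hcop, Nat.card_eq_fintype_card]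
  congr 1
  omega

theorem stmt_6 (F : Type*) [Field F] [Fintype F] [DecidableEq F] (q : ℕ) (hq : q = Fintype.card F)
    (da db : ℕ) (h1 : 1 ≤ da) (h2 : da ≤ db)
    (Q : F[X] × F[X] × F[X]) (hQ : Q ∈ Qset F da)
    (δ : ℕ) (hδ : δ = (gcd Q.1 (gcd Q.2.1 Q.2.2)).natDegree) :
    Set.ncard {R : F[X] × F[X] × F[X] | R ∈ Rset F db ∧ Intersecting Q R} =
      q ^ (2 * db - da + δ) :=
  stmt_6_general F q hq da db h2 Q hQ δ hδ
end

section
/- Let d_b ≥ d_a ≥ 1 be integers. Then the total number of intersecting pairs (Q, R) ∈ 𝒬_{d_a} × ℛ_{d_b} equals q^{2d_b − d_a} · (q^{3d_a} + q^{3d_a−1} − q^{2d_a−1}). -/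
open Polynomial

/-! Write `Q = g • U` with `g` the monic gcd of the entries of `Q` and `U` primitive. Whether
`Q` meets `R` depends only on `U`, and for primitive `U ∈ 𝒬_k` with `k ≤ n` the map
`(r₀, r₁, r₂) ↦ u₀r₀ + u₁r₁ + u₂r₂` from triples of degree `< n` to polynomials of degree
`< k + n` is onto (Bézout, then reduce `r₁, r₂` modulo the monic `u₀`). Hence `U` meets exactly
`q ^ (2n - k)` elements of `ℛ_n`. Splitting off the gcd identifies `𝒬_m` with the union over
`i + j = m` of (monic of degree `i`) × (primitive in `𝒬_j`), so `q ^ (3m) = ∑ qⁱ Pⱼ` for the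
numbers `Pⱼ` of primitive triples; this recursion determines `Pⱼ`, and the number of
intersecting pairs is `q ^ (2n - m) ∑ q²ⁱ Pⱼ`. -/

open Finset

section Degree

variable {R : Type*}

theorem mul_mem_degreeLT_of_degree_le [Semiring R] {p r : R[X]} {a b : ℕ}
    (hp : p.degree ≤ a) (hr : r ∈ degreeLT R b) : p * r ∈ degreeLT R (a + b) := by
  rw [mem_degreeLT] at hr ⊢
  calc (p * r).degree ≤ p.degree + r.degree := degree_mul_le p r
    _ ≤ a + r.degree := add_le_add_left hp _
    _ < a + b := WithBot.add_lt_add_left WithBot.coe_ne_bot hr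

theorem Polynomial.Monic.mul_mem_degreeLT_add_iff [CommSemiring R] [Nontrivial R] {h p : R[X]}
    (hh : h.Monic) {j : ℕ} : h * p ∈ degreeLT R (h.natDegree + j) ↔ p ∈ degreeLT R j := by
  rw [mem_degreeLT, mem_degreeLT, mul_comm, hh.degree_mul, add_comm,
    degree_eq_natDegree hh.ne_zero, Nat.cast_add]
  exact WithBot.add_lt_add_iff_left WithBot.coe_ne_bot

theorem monic_and_natDegree_eq_iff [Ring R] [Nontrivial R] {p : R[X]} {d : ℕ} :
    p.Monic ∧ p.natDegree = d ↔ p - X ^ d ∈ degreeLT R d := by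
  rw [mem_degreeLT]
  constructor
  · rintro ⟨hm, rfl⟩
    have hdeg : p.degree = (X ^ p.natDegree : R[X]).degree := by
      rw [degree_X_pow, degree_eq_natDegree hm.ne_zero]
    simpa [← degree_eq_natDegree hm.ne_zero] using
      degree_sub_lt_left hdeg hm.ne_zero (by rw [hm.leadingCoeff, (monic_X_pow _).leadingCoeff])
  · intro h
    have hlt : (p - X ^ d).degree < (X ^ d : R[X]).degree := by rwa [degree_X_pow]
    rw [← sub_add_cancel p (X ^ d), add_comm]
    exact ⟨monic_X_pow_add h, by rw [natDegree_add_eq_left_of_degree_lt hlt, natDegree_X_pow]⟩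

end Degree

section TripleGcd

variable {α : Type*} [CommMonoidWithZero α] [StrongNormalizedGCDMonoid α]

def tripleGcd (u : α × α × α) : α := gcd u.1 (gcd u.2.1 u.2.2)

theorem tripleGcd_smul (a : α) (u : α × α × α) :
    tripleGcd (a • u) = normalize a * tripleGcd u := by
  simp only [tripleGcd, Prod.smul_fst, Prod.smul_snd, smul_eq_mul]
  rw [_root_.gcd_mul_left, ((normalize_associated a).mul_right _).gcd_eq_right,
    _root_.gcd_mul_left]

theorem normalize_tripleGcd (u : α × α × α) : normalize (tripleGcd u) = tripleGcd u :=
  normalize_gcd _ _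

theorem exists_eq_tripleGcd_smul {u : α × α × α} (hu : tripleGcd u ≠ 0) :
    ∃ v, u = tripleGcd u • v ∧ tripleGcd v = 1 := by
  obtain ⟨a, ha⟩ : tripleGcd u ∣ u.1 := gcd_dvd_left _ _
  obtain ⟨b, hb⟩ : tripleGcd u ∣ u.2.1 := (gcd_dvd_right _ _).trans (gcd_dvd_left _ _)
  obtain ⟨c, hc⟩ : tripleGcd u ∣ u.2.2 := (gcd_dvd_right _ _).trans (gcd_dvd_right _ _)
  have hsmul : u = tripleGcd u • (a, b, c) := Prod.ext ha (Prod.ext hb hc)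
  refine ⟨(a, b, c), hsmul, ?_⟩
  have h : tripleGcd u * tripleGcd (a, b, c) = tripleGcd u := by
    conv_rhs => rw [hsmul]
    rw [tripleGcd_smul, normalize_tripleGcd]
  exact (mul_eq_left₀ hu).1 h

theorem exists_eq_add_of_tripleGcd_dvd {R : Type*} [CommRing R] [IsDomain R] [IsBezout R]
    [StrongNormalizedGCDMonoid R] {u : R × R × R} {z : R} (hz : tripleGcd u ∣ z) :
    ∃ a b c, z = u.1 * a + u.2.1 * b + u.2.2 * c := by
  obtain ⟨a, y, rfl⟩ := (gcd_dvd_iff_exists u.1 (gcd u.2.1 u.2.2)).1 hz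
  obtain ⟨b, c, hbc⟩ := (gcd_dvd_iff_exists u.2.1 u.2.2).1 (dvd_mul_right (gcd u.2.1 u.2.2) y)
  exact ⟨a, b, c, by rw [hbc, add_assoc]⟩

end TripleGcd

section Counting

theorem AddMonoidHom.natCard_preimage_singleton_mul_natCard {G H : Type*} [AddGroup G]
    [AddGroup H] {f : G →+ H} (hf : Function.Surjective f) (h : H) :
    Nat.card (f ⁻¹' {h}) * Nat.card H = Nat.card G := by
  rw [Nat.card_congr (f.fiberEquivKerOfSurjective hf h), ← AddSubgroup.card_top (G := H),
    ← AddMonoidHom.range_eq_top.2 hf, ← AddSubgroup.index_ker, AddSubgroup.card_mul_index]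

theorem Nat.card_sigma_of_forall_card_eq {α : Type*} {β : α → Type*} [Finite α]
    [∀ a, Finite (β a)] {c : ℕ} (h : ∀ a, Nat.card (β a) = c) :
    Nat.card (Σ a, β a) = Nat.card α * c := by
  have := Fintype.ofFinite α
  rw [Nat.card_sigma, Finset.sum_congr rfl fun a _ => h a, Finset.sum_const, Finset.card_univ,
    smul_eq_mul, Nat.card_eq_fintype_card]

theorem sum_antidiagonal_succ_pow_mul {R : Type*} [CommSemiring R] (c : R) (P : ℕ → R) (m : ℕ) :
    ∑ p ∈ antidiagonal (m + 1), c ^ p.1 * P p.2 =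
      P (m + 1) + c * ∑ p ∈ antidiagonal m, c ^ p.1 * P p.2 := by
  simp only [Finset.Nat.sum_antidiagonal_succ, Finset.mul_sum, pow_zero, one_mul, pow_succ',
    mul_assoc]

theorem sum_antidiagonal_sq_pow_mul_add_pow {q : ℕ} {P : ℕ → ℕ}
    (hP : ∀ m, ∑ p ∈ antidiagonal m, q ^ p.1 * P p.2 = q ^ (3 * m)) (m : ℕ) :
    ∑ p ∈ antidiagonal (m + 1), (q ^ 2) ^ p.1 * P p.2 + q ^ (2 * m + 1) =
      q ^ (3 * m + 3) + q ^ (3 * m + 2) := by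
  have hrec (j : ℕ) : P (j + 1) + q ^ (3 * j + 1) = q ^ (3 * j + 3) := by
    have h := hP (j + 1)
    rw [sum_antidiagonal_succ_pow_mul, hP j] at h
    linear_combination h
  induction m with
  | zero =>
    have h0 := hP 0
    simp only [Finset.Nat.antidiagonal_zero, Finset.sum_singleton, pow_zero, one_mul] at h0
    rw [sum_antidiagonal_succ_pow_mul, Finset.Nat.antidiagonal_zero, Finset.sum_singleton]
    linear_combination hrec 0 + q ^ 2 * h0
  | succ m ih =>
    rw [sum_antidiagonal_succ_pow_mul]
    linear_combination hrec (m + 1) + q ^ 2 * ih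

end Counting

noncomputable section

variable {F : Type*} [Field F]

section Sets

theorem mem_Qset_iff {m : ℕ} {Q : F[X] × F[X] × F[X]} :
    Q ∈ Qset F m ↔ Q.1 - X ^ m ∈ degreeLT F m ∧ Q.2.1 ∈ degreeLT F m ∧ Q.2.2 ∈ degreeLT F m := by
  rw [← monic_and_natDegree_eq_iff, mem_degreeLT, mem_degreeLT, Qset, Set.mem_ofPred_eq, and_assoc]

theorem mem_Rset_iff {n : ℕ} {R : F[X] × F[X] × F[X]} :
    R ∈ Rset F n ↔ R.1 ∈ degreeLT F n ∧ R.2.1 ∈ degreeLT F n ∧ R.2.2 - X ^ n ∈ degreeLT F n := by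
  rw [← monic_and_natDegree_eq_iff, mem_degreeLT, mem_degreeLT, Rset, Set.mem_ofPred_eq]
  tauto

theorem smul_mem_Qset_iff {h : F[X]} (hh : h.Monic) {j : ℕ} {u : F[X] × F[X] × F[X]} :
    h • u ∈ Qset F (h.natDegree + j) ↔ u ∈ Qset F j := by
  simp only [Qset, Set.mem_ofPred_eq, Prod.smul_fst, Prod.smul_snd, smul_eq_mul,
    ← mem_degreeLT, hh.mul_mem_degreeLT_add_iff]
  refine ⟨fun ⟨hm, hd, h1, h2⟩ => ⟨hh.of_mul_monic_left hm, ?_, h1, h2⟩,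
    fun ⟨hm, hd, h1, h2⟩ => ⟨hh.mul hm, by rw [hh.natDegree_mul hm, hd], h1, h2⟩⟩
  rwa [hh.natDegree_mul (hh.of_mul_monic_left hm), add_right_inj] at hd

def rsetEquivQset (n : ℕ) : Rset F n ≃ Qset F n :=
  Equiv.subtypeEquiv ⟨fun R => (R.2.2, R.1, R.2.1), fun Q => (Q.2.1, Q.2.2, Q.1),
    fun _ => rfl, fun _ => rfl⟩ fun _ => Iff.rfl

def intersectingRset (F : Type*) [Field F] (n : ℕ) (Q : F[X] × F[X] × F[X]) :
    Set (F[X] × F[X] × F[X]) :=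
  {R | R ∈ Rset F n ∧ Intersecting Q R}

theorem intersectingRset_smul {h : F[X]} (hh : h ≠ 0) (n : ℕ) (u : F[X] × F[X] × F[X]) :
    intersectingRset F n (h • u) = intersectingRset F n u := by
  ext R
  simp only [intersectingRset, Intersecting, Set.mem_ofPred_eq, Prod.smul_fst, Prod.smul_snd,
    smul_eq_mul, mul_assoc, ← mul_add, mul_eq_zero, hh, false_or]

def monicOfDegree (F : Type*) [Field F] (d : ℕ) : Set F[X] := {p | p.Monic ∧ p.natDegree = d}

def primitiveQset (F : Type*) [Field F] [DecidableEq F] (k : ℕ) : Set (F[X] × F[X] × F[X]) :=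
  {u | u ∈ Qset F k ∧ tripleGcd u = 1}

end Sets


section Card

theorem natCard_degreeLT (n : ℕ) : Nat.card (degreeLT F n) = Nat.card F ^ n := by
  rw [Nat.card_congr (degreeLTEquiv F n).toEquiv, Nat.card_fun, Nat.card_fin]

def monicOfDegreeEquiv (d : ℕ) : monicOfDegree F d ≃ degreeLT F d :=
  Equiv.subtypeEquiv (Equiv.subRight (X ^ d)) fun _ => monic_and_natDegree_eq_iff

def qsetEquiv (m : ℕ) : Qset F m ≃ degreeLT F m × degreeLT F m × degreeLT F m where
  toFun Q := (⟨Q.1.1 - X ^ m, (mem_Qset_iff.1 Q.2).1⟩, ⟨Q.1.2.1, (mem_Qset_iff.1 Q.2).2.1⟩,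
    ⟨Q.1.2.2, (mem_Qset_iff.1 Q.2).2.2⟩)
  invFun v := ⟨((v.1 : F[X]) + X ^ m, v.2.1, v.2.2), mem_Qset_iff.2 ⟨by simp, v.2.1.2, v.2.2.2⟩⟩
  left_inv Q := by simp
  right_inv v := by simp

theorem natCard_monicOfDegree (d : ℕ) : Nat.card (monicOfDegree F d) = Nat.card F ^ d := by
  rw [Nat.card_congr (monicOfDegreeEquiv d), natCard_degreeLT]

theorem natCard_Qset (m : ℕ) : Nat.card (Qset F m) = Nat.card F ^ (3 * m) := by
  rw [Nat.card_congr (qsetEquiv m), Nat.card_prod, Nat.card_prod, natCard_degreeLT, ← pow_add,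
    ← pow_add]
  ring_nf

variable [Finite F]

instance (n : ℕ) : Finite (degreeLT F n) := Module.finite_of_finite F

instance (d : ℕ) : Finite (monicOfDegree F d) := .of_equiv _ (monicOfDegreeEquiv d).symm

instance (m : ℕ) : Finite (Qset F m) := .of_equiv _ (qsetEquiv m).symm

instance [DecidableEq F] (k : ℕ) : Finite (primitiveQset F k) :=
  Finite.Set.subset (Qset F k) fun _ hu => hu.1

instance (n : ℕ) : Finite (Rset F n) := .of_equiv _ (rsetEquivQset n).symm

instance (n : ℕ) (Q : F[X] × F[X] × F[X]) : Finite (intersectingRset F n Q) :=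
  Finite.Set.subset (Rset F n) fun _ hR => hR.1

end Card


section Pairing

variable {k n : ℕ} {u : F[X] × F[X] × F[X]}

def pairingHom (hu : u ∈ Qset F k) (n : ℕ) :
    degreeLT F n × degreeLT F n × degreeLT F n →+ degreeLT F (k + n) :=
  have h0 : u.1.degree ≤ k := hu.2.1 ▸ degree_le_natDegree
  AddMonoidHom.mk' (fun v => ⟨u.1 * v.1 + u.2.1 * v.2.1 + u.2.2 * v.2.2,
      add_mem (add_mem (mul_mem_degreeLT_of_degree_le h0 v.1.2)
        (mul_mem_degreeLT_of_degree_le hu.2.2.1.le v.2.1.2))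
        (mul_mem_degreeLT_of_degree_le hu.2.2.2.le v.2.2.2)⟩)
    fun v w => Subtype.ext <| by simp only [Prod.fst_add, Prod.snd_add, Submodule.coe_add]; ring

@[simp]
theorem pairingHom_apply (hu : u ∈ Qset F k) (v : degreeLT F n × degreeLT F n × degreeLT F n) :
    (pairingHom hu n v : F[X]) = u.1 * v.1 + u.2.1 * v.2.1 + u.2.2 * v.2.2 :=
  rfl

theorem pairingHom_surjective [DecidableEq F] (hkn : k ≤ n) (hu : u ∈ Qset F k)
    (hprim : tripleGcd u = 1) :
    Function.Surjective (pairingHom hu n) := by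
  rintro ⟨P, hP⟩
  obtain ⟨a, b, c, habc⟩ := exists_eq_add_of_tripleGcd_dvd (hprim ▸ one_dvd P)
  have hmonic : u.1.Monic := hu.1
  have hmod (r : F[X]) : r %ₘ u.1 ∈ degreeLT F n := by
    refine degreeLT_mono hkn (mem_degreeLT.2 ?_)
    simpa [degree_eq_natDegree hmonic.ne_zero, hu.2.1] using degree_modByMonic_lt r hmonic
  set a' := a + u.2.1 * (b /ₘ u.1) + u.2.2 * (c /ₘ u.1)
  have key : u.1 * a' + u.2.1 * (b %ₘ u.1) + u.2.2 * (c %ₘ u.1) = P := by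
    linear_combination (-habc) + u.2.1 * modByMonic_add_div b u.1 +
      u.2.2 * modByMonic_add_div c u.1
  have ha' : a' ∈ degreeLT F n := by
    refine hmonic.mul_mem_degreeLT_add_iff.1 ?_
    rw [hu.2.1, eq_sub_of_add_eq (eq_sub_of_add_eq key)]
    exact sub_mem (sub_mem hP (mul_mem_degreeLT_of_degree_le hu.2.2.2.le (hmod c)))
      (mul_mem_degreeLT_of_degree_le hu.2.2.1.le (hmod b))
  exact ⟨(⟨a', ha'⟩, ⟨_, hmod b⟩, ⟨_, hmod c⟩), Subtype.ext key⟩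

theorem neg_mul_X_pow_mem_degreeLT (hu : u ∈ Qset F k) (n : ℕ) :
    -(u.2.2 * X ^ n) ∈ degreeLT F (k + n) := by
  rw [mul_comm, add_comm]
  exact neg_mem (mul_mem_degreeLT_of_degree_le (degree_X_pow_le n) (mem_degreeLT.2 hu.2.2.2))

def intersectingRsetEquiv (hu : u ∈ Qset F k) (n : ℕ) :
    intersectingRset F n u ≃ pairingHom hu n ⁻¹' {⟨_, neg_mul_X_pow_mem_degreeLT hu n⟩} where
  toFun R := ⟨(⟨R.1.1, (mem_Rset_iff.1 R.2.1).1⟩, ⟨R.1.2.1, (mem_Rset_iff.1 R.2.1).2.1⟩,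
      ⟨R.1.2.2 - X ^ n, (mem_Rset_iff.1 R.2.1).2.2⟩),
    Subtype.ext <| by
      have hR : u.1 * R.1.1 + u.2.1 * R.1.2.1 + u.2.2 * R.1.2.2 = 0 := R.2.2
      rw [pairingHom_apply]
      linear_combination hR⟩
  invFun v := ⟨(v.1.1, v.1.2.1, (v.1.2.2 : F[X]) + X ^ n),
    mem_Rset_iff.2 ⟨v.1.1.2, v.1.2.1.2, by simp⟩, by
      have hv := congrArg Subtype.val v.2
      rw [pairingHom_apply] at hv
      show u.1 * _ + u.2.1 * _ + u.2.2 * _ = 0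
      linear_combination hv⟩
  left_inv R := by simp
  right_inv v := by simp

theorem natCard_intersectingRset_of_tripleGcd_eq_one [Finite F] [DecidableEq F] (hkn : k ≤ n)
    (hu : u ∈ Qset F k) (hprim : tripleGcd u = 1) :
    Nat.card (intersectingRset F n u) = Nat.card F ^ (2 * n - k) := by
  have hcard := AddMonoidHom.natCard_preimage_singleton_mul_natCard
    (pairingHom_surjective (n := n) hkn hu hprim) ⟨_, neg_mul_X_pow_mem_degreeLT hu n⟩
  rw [← Nat.card_congr (intersectingRsetEquiv hu n), natCard_degreeLT, Nat.card_prod,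
    Nat.card_prod, natCard_degreeLT] at hcard
  refine Nat.eq_of_mul_eq_mul_right (pow_pos (Nat.card_pos (α := F)) (k + n)) ?_
  rw [hcard, ← pow_add, ← pow_add, ← pow_add]
  congr 1
  omega

end Pairing

section Stratification

variable [DecidableEq F] (m : ℕ)

def smulOfStratum
    (x : Σ p : antidiagonal m, monicOfDegree F p.1.1 × primitiveQset F p.1.2) : Qset F m :=
  ⟨x.2.1.1 • x.2.2.1, by
    have h := (smul_mem_Qset_iff x.2.1.2.1).2 x.2.2.2.1
    rwa [x.2.1.2.2, HasAntidiagonal.mem_antidiagonal.1 x.1.2] at h⟩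

theorem smulOfStratum_injective : Function.Injective (smulOfStratum (F := F) m) := by
  rintro ⟨⟨⟨i, j⟩, hij⟩, ⟨h, hh⟩, ⟨U, hU⟩⟩ ⟨⟨⟨i', j'⟩, hij'⟩, ⟨h', hh'⟩, ⟨U', hU'⟩⟩ heq
  have hQ : h • U = h' • U' := congrArg Subtype.val heq
  obtain rfl : h = h' := by
    have := congrArg tripleGcd hQ
    rwa [tripleGcd_smul, tripleGcd_smul, hU.2, hU'.2, mul_one, mul_one, hh.1.normalize_eq_self,
      hh'.1.normalize_eq_self] at this
  obtain rfl : U = U' := smul_right_injective _ hh.1.ne_zero hQ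
  obtain rfl : i = i' := hh.2.symm.trans hh'.2
  obtain rfl : j = j' := by rw [HasAntidiagonal.mem_antidiagonal] at hij hij'; omega
  rfl

theorem smulOfStratum_surjective : Function.Surjective (smulOfStratum (F := F) m) := by
  rintro ⟨Q, hQ⟩
  have hg0 : tripleGcd Q ≠ 0 := fun h => hQ.1.ne_zero ((gcd_eq_zero_iff _ _).1 h).1
  obtain ⟨U, hQU, hU⟩ := exists_eq_tripleGcd_smul hg0
  have hg : (tripleGcd Q).Monic := normalize_tripleGcd Q ▸ monic_normalize hg0
  rw [hQU] at hQ
  have hU0 : U.1.Monic := hg.of_mul_monic_left hQ.1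
  have hm : (tripleGcd Q).natDegree + U.1.natDegree = m := by
    rw [← hg.natDegree_mul hU0]
    exact hQ.2.1
  rw [← hm, smul_mem_Qset_iff hg] at hQ
  exact ⟨⟨⟨((tripleGcd Q).natDegree, U.1.natDegree), HasAntidiagonal.mem_antidiagonal.2 hm⟩,
    ⟨_, hg, rfl⟩, ⟨U, hQ, hU⟩⟩, Subtype.ext hQU.symm⟩

def stratification :
    (Σ p : antidiagonal m, monicOfDegree F p.1.1 × primitiveQset F p.1.2) ≃ Qset F m :=
  .ofBijective _ ⟨smulOfStratum_injective m, smulOfStratum_surjective m⟩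

theorem coe_stratification_apply
    (x : Σ p : antidiagonal m, monicOfDegree F p.1.1 × primitiveQset F p.1.2) :
    (stratification m x : F[X] × F[X] × F[X]) = x.2.1.1 • x.2.2.1 :=
  rfl

end Stratification


section Count

variable [Finite F] [DecidableEq F]

theorem sum_antidiagonal_pow_mul_natCard_primitiveQset (m : ℕ) :
    ∑ p ∈ antidiagonal m, Nat.card F ^ p.1 * Nat.card (primitiveQset F p.2) =
      Nat.card F ^ (3 * m) := by
  rw [← natCard_Qset, ← Nat.card_congr (stratification m), Nat.card_sigma, ← Finset.sum_coe_sort]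
  simp only [Nat.card_prod, natCard_monicOfDegree]

theorem natCard_intersectingPairs {m n : ℕ} (hmn : m ≤ n) :
    Nat.card {p : (F[X] × F[X] × F[X]) × (F[X] × F[X] × F[X]) |
        p.1 ∈ Qset F m ∧ p.2 ∈ Rset F n ∧ Intersecting p.1 p.2} =
      Nat.card F ^ (2 * n - m) *
        ∑ p ∈ antidiagonal m, (Nat.card F ^ 2) ^ p.1 * Nat.card (primitiveQset F p.2) := by
  let pairsEquiv : {p : (F[X] × F[X] × F[X]) × (F[X] × F[X] × F[X]) |
      p.1 ∈ Qset F m ∧ p.2 ∈ Rset F n ∧ Intersecting p.1 p.2} ≃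
      Σ Q : Qset F m, intersectingRset F n Q :=
    { toFun s := ⟨⟨s.1.1, s.2.1⟩, s.1.2, s.2.2⟩
      invFun t := ⟨(t.1, t.2), t.1.2, t.2.2⟩
      left_inv _ := rfl
      right_inv _ := rfl }
  let strataEquiv : (Σ Q : Qset F m, intersectingRset F n Q) ≃
      Σ p : antidiagonal m, Σ y : monicOfDegree F p.1.1 × primitiveQset F p.1.2,
        intersectingRset F n (stratification m ⟨p, y⟩) :=
    (Equiv.sigmaCongrLeft (β := fun Q : Qset F m => intersectingRset F n Q)
      (stratification m)).symm.trans <| Equiv.sigmaAssoc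
        fun (p : antidiagonal m) (y : monicOfDegree F p.1.1 × primitiveQset F p.1.2) =>
          intersectingRset F n (stratification m ⟨p, y⟩)
  rw [Nat.card_congr (pairsEquiv.trans strataEquiv), Nat.card_sigma, Finset.mul_sum,
    ← Finset.sum_coe_sort (antidiagonal m)]
  refine Finset.sum_congr rfl fun ⟨⟨i, j⟩, hij⟩ _ => ?_
  rw [HasAntidiagonal.mem_antidiagonal] at hij
  rw [Nat.card_sigma_of_forall_card_eq (c := Nat.card F ^ (2 * n - j)), Nat.card_prod,
    natCard_monicOfDegree, ← pow_mul, show 2 * n - j = 2 * n - m + i by omega, pow_add]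
  · ring
  · rintro ⟨h, U⟩
    rw [coe_stratification_apply, intersectingRset_smul h.2.1.ne_zero,
      natCard_intersectingRset_of_tripleGcd_eq_one (show j ≤ n by omega) U.2.1 U.2.2]

end Count

end


theorem stmt_7 (F : Type*) [Field F] [Fintype F] (q : ℕ) (hq : q = Fintype.card F)
    (da db : ℕ) (h1 : 1 ≤ da) (h2 : da ≤ db) :
    Set.ncard {p : (F[X] × F[X] × F[X]) × (F[X] × F[X] × F[X]) |
        p.1 ∈ Qset F da ∧ p.2 ∈ Rset F db ∧ Intersecting p.1 p.2} =
      q ^ (2 * db - da) * (q ^ (3 * da) + q ^ (3 * da - 1) - q ^ (2 * da - 1)) := by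
  classical
  obtain ⟨k, rfl⟩ : ∃ k, da = k + 1 := ⟨da - 1, by omega⟩
  have hsum := sum_antidiagonal_sq_pow_mul_add_pow (P := fun j => Nat.card (primitiveQset F j))
    sum_antidiagonal_pow_mul_natCard_primitiveQset k
  rw [← Nat.card_coe_set_eq, natCard_intersectingPairs h2, hq, ← Nat.card_eq_fintype_card,
    show 3 * (k + 1) - 1 = 3 * k + 2 by omega, show 3 * (k + 1) = 3 * k + 3 by ring,
    show 2 * (k + 1) - 1 = 2 * k + 1 by omega]
  congr 1
  omega
end

section
/- For integers d₁, d₂ ≥ 1, let N(d₁, d₂) be the number of intersecting pairs (Q, R) ∈ 𝒬_{d₁} × ℛ_{d₂} with both Q and R primitive, and for integers a, b ≥ 0 let T(a, b) be the total number of intersecting pairs in 𝒬_a × ℛ_b. Then the Möbius-inversion identity N(d₁, d₂) + q·T(d₁−1, d₂) + q·T(d₁, d₂−1) = T(d₁, d₂) + q²·T(d₁−1, d₂−1) holds for all d₁, d₂ ≥ 1. -/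
/-!
Write a triple `Q` with monic first entry as `g • P`, where `g` is the monic gcd of its entries
(its content) and `P` is primitive. Replacing `g` by `X * g + c` is a bijection from `𝔽 × 𝒬_a`
onto the non-primitive triples of `𝒬_{a+1}` (the inverse reads `c` and `g` off the constant term
and `divX` of the content), and it does not change whether `Q` intersects a given `R`, since that
depends only on `P`. Hence, for every finite set `W` of triples, the intersecting pairs in
`𝒬_{a+1} × W` are those with `Q` primitive plus `q` times those in `𝒬_a × W`.

Reversing triples, `(t₀, t₁, t₂) ↦ (t₂, t₁, t₀)`, exchanges `𝒬_d` and `ℛ_d`, so the same recursion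
holds in the degree of `R`. Applying it in `d₁` to `T(d₁, d₂)` and `T(d₁, d₂ - 1)`, then in `d₂` to
the pairs whose `Q` is primitive, and eliminating the intermediate counts gives the identity.
-/

open Polynomial

section Polynomial

variable {R : Type*} [Semiring R]

theorem degree_mul_lt_iff_of_monic [Nontrivial R] {g : R[X]} (hg : g.Monic) (p : R[X]) (n : ℕ) :
    (g * p).degree < ↑(g.natDegree + n) ↔ p.degree < n := by
  rw [hg.degree_mul_comm, hg.degree_mul, degree_eq_natDegree hg.ne_zero, Nat.cast_add, add_comm]
  exact WithBot.add_lt_add_iff_left (WithBot.natCast_ne_bot _)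

theorem natDegree_X_mul_add_C [Nontrivial R] {g : R[X]} (hg : g ≠ 0) (c : R) :
    (X * g + C c).natDegree = g.natDegree + 1 := by
  rw [natDegree_add_C, natDegree_X_mul hg]

theorem monic_X_mul_add_C [Nontrivial R] {g : R[X]} (hg : g.Monic) (c : R) :
    (X * g + C c).Monic := by
  refine (monic_X.mul hg).add_of_left (degree_C_le.trans_lt ?_)
  rw [degree_eq_natDegree (monic_X.mul hg).ne_zero, natDegree_X_mul hg.ne_zero]
  exact_mod_cast Nat.succ_pos _

theorem divX_X_mul_add_C (g : R[X]) (c : R) : divX (X * g + C c) = g := by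
  ext n
  rw [coeff_divX, coeff_add, coeff_C_succ, add_zero, coeff_X_mul]

theorem monic_divX {g : R[X]} (hg : g.Monic) (h : 1 ≤ g.natDegree) : g.divX.Monic := by
  rw [Monic, leadingCoeff, natDegree_divX_eq_natDegree_tsub_one, coeff_divX,
    Nat.sub_add_cancel h]
  exact hg

end Polynomial

abbrev Triple (F : Type*) [Field F] := F[X] × F[X] × F[X]

section Scaling

variable {F : Type*} [Field F]

theorem smul_mem_qset_iff {g : F[X]} (hg : g.Monic) (t : Triple F) (n : ℕ) :
    g • t ∈ Qset F (g.natDegree + n) ↔ t ∈ Qset F n := by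
  simp only [Qset, Set.mem_ofPred_eq, Prod.smul_fst, Prod.smul_snd, smul_eq_mul,
    degree_mul_lt_iff_of_monic hg]
  constructor
  · rintro ⟨hm, hd, h₁, h₂⟩
    have ht : t.1.Monic := hg.of_mul_monic_left hm
    rw [hg.natDegree_mul ht] at hd
    exact ⟨ht, by omega, h₁, h₂⟩
  · rintro ⟨hm, hd, h₁, h₂⟩
    exact ⟨hg.mul hm, by rw [hg.natDegree_mul hm, hd], h₁, h₂⟩

theorem intersecting_smul_iff {g : F[X]} (hg : g ≠ 0) (t R : Triple F) :
    Intersecting (g • t) R ↔ Intersecting t R := by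
  simp only [Intersecting, Prod.smul_fst, Prod.smul_snd, smul_eq_mul, mul_assoc, ← mul_add,
    mul_eq_zero, hg, false_or]

end Scaling

namespace Triple

variable {F : Type*} [Field F] [DecidableEq F]

noncomputable def content (t : Triple F) : F[X] := gcd t.1 (gcd t.2.1 t.2.2)

noncomputable def primPart (t : Triple F) : Triple F :=
  (t.1 / content t, t.2.1 / content t, t.2.2 / content t)

theorem content_dvd_fst (t : Triple F) : content t ∣ t.1 := gcd_dvd_left _ _

theorem content_dvd_snd_fst (t : Triple F) : content t ∣ t.2.1 :=
  (gcd_dvd_right _ _).trans (gcd_dvd_left _ _)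

theorem content_dvd_snd_snd (t : Triple F) : content t ∣ t.2.2 :=
  (gcd_dvd_right _ _).trans (gcd_dvd_right _ _)

theorem primitive_iff_isUnit_content (t : Triple F) : Primitive t ↔ IsUnit (content t) :=
  ⟨fun h => h _ t.content_dvd_fst t.content_dvd_snd_fst t.content_dvd_snd_snd,
    fun h _ h₁ h₂ h₃ => isUnit_of_dvd_unit (dvd_gcd h₁ (dvd_gcd h₂ h₃)) h⟩

theorem content_smul {g : F[X]} (hg : g.Monic) (t : Triple F) :
    content (g • t) = g * content t := by
  simp only [content, Prod.smul_fst, Prod.smul_snd, smul_eq_mul]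
  rw [gcd_mul_left, hg.normalize_eq_self, gcd_mul_left, hg.normalize_eq_self]

theorem content_smul_primPart (t : Triple F) : content t • primPart t = t := by
  have cancel {a : F[X]} (h : content t ∣ a) : content t * (a / content t) = a := by
    rcases eq_or_ne (content t) 0 with h0 | h0
    · rw [h0, zero_mul, eq_comm, ← zero_dvd_iff, ← h0]
      exact h
    · exact EuclideanDomain.mul_div_cancel' h0 h
  simp only [primPart, Prod.smul_mk, smul_eq_mul, cancel t.content_dvd_fst,
    cancel t.content_dvd_snd_fst, cancel t.content_dvd_snd_snd]

theorem monic_content {t : Triple F} (ht : t.1 ≠ 0) : (content t).Monic := by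
  rw [content, ← normalize_gcd]
  exact monic_normalize fun h => ht ((gcd_eq_zero_iff _ _).mp h).1

theorem content_primPart {t : Triple F} (ht : t.1 ≠ 0) : content (primPart t) = 1 := by
  have hc := monic_content ht
  have key := congrArg content (content_smul_primPart t)
  rw [content_smul hc] at key
  exact (mul_eq_left₀ hc.ne_zero).mp key

theorem content_smul_of_content_eq_one {g : F[X]} (hg : g.Monic) {t : Triple F}
    (ht : content t = 1) : content (g • t) = g := by
  rw [content_smul hg, ht, mul_one]

theorem primPart_smul_of_content_eq_one {g : F[X]} (hg : g.Monic) {t : Triple F}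
    (ht : content t = 1) : primPart (g • t) = t := by
  simp only [primPart, content_smul_of_content_eq_one hg ht, Prod.smul_fst, Prod.smul_snd,
    smul_eq_mul, mul_div_cancel_left₀ _ hg.ne_zero]

theorem primitive_iff_content_eq_one {t : Triple F} (ht : t.1 ≠ 0) :
    Primitive t ↔ content t = 1 := by
  rw [primitive_iff_isUnit_content, (monic_content ht).isUnit_iff]

theorem intersecting_smul_primPart_iff {g : F[X]} (hg : g ≠ 0) {t : Triple F} (ht : t.1 ≠ 0)
    (R : Triple F) : Intersecting (g • primPart t) R ↔ Intersecting t R := by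
  conv_rhs => rw [← content_smul_primPart t]
  rw [intersecting_smul_iff hg, intersecting_smul_iff (monic_content ht).ne_zero]

theorem smul_primPart_mem_qset {t : Triple F} {n : ℕ} (ht : t ∈ Qset F n) {g : F[X]}
    (hg : g.Monic) {k : ℕ} (hk : g.natDegree + n = k + (content t).natDegree) :
    g • primPart t ∈ Qset F k := by
  have ht₀ : t.1 ≠ 0 := ht.1.ne_zero
  obtain ⟨m, rfl⟩ := Nat.exists_eq_add_of_le
    (natDegree_le_of_dvd (content_dvd_fst t) ht₀ |>.trans_eq ht.2.1)
  have hp : primPart t ∈ Qset F m := by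
    rw [← smul_mem_qset_iff (monic_content ht₀), content_smul_primPart]
    exact ht
  rw [show k = g.natDegree + m by omega]
  exact (smul_mem_qset_iff hg _ _).mpr hp

theorem one_le_natDegree_content {t : Triple F} (ht : t.1 ≠ 0) (hnp : ¬Primitive t) :
    1 ≤ (content t).natDegree := by
  rw [primitive_iff_content_eq_one ht, ← (monic_content ht).natDegree_eq_zero] at hnp
  omega

noncomputable def raiseContent (c : F) (t : Triple F) : Triple F :=
  (X * content t + C c) • primPart t

noncomputable def lowerContent (t : Triple F) : Triple F :=
  divX (content t) • primPart t

theorem content_raiseContent (c : F) {t : Triple F} (ht : t.1 ≠ 0) :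
    content (raiseContent c t) = X * content t + C c :=
  content_smul_of_content_eq_one (monic_X_mul_add_C (monic_content ht) c) (content_primPart ht)

theorem content_lowerContent {t : Triple F} (ht : t.1 ≠ 0) (hnp : ¬Primitive t) :
    content (lowerContent t) = divX (content t) :=
  content_smul_of_content_eq_one (monic_divX (monic_content ht) (one_le_natDegree_content ht hnp))
    (content_primPart ht)

theorem raiseContent_mem_qset (c : F) {t : Triple F} {n : ℕ} (ht : t ∈ Qset F n) :
    raiseContent c t ∈ Qset F (n + 1) := by
  have hc := monic_content ht.1.ne_zero
  refine smul_primPart_mem_qset ht (monic_X_mul_add_C hc c) ?_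
  rw [natDegree_X_mul_add_C hc.ne_zero]
  omega

theorem lowerContent_mem_qset {t : Triple F} {n : ℕ} (ht : t ∈ Qset F (n + 1))
    (hnp : ¬Primitive t) : lowerContent t ∈ Qset F n := by
  have ht₀ : t.1 ≠ 0 := ht.1.ne_zero
  have hdeg := one_le_natDegree_content ht₀ hnp
  refine smul_primPart_mem_qset ht (monic_divX (monic_content ht₀) hdeg) ?_
  rw [natDegree_divX_eq_natDegree_tsub_one]
  omega

theorem not_primitive_raiseContent (c : F) {t : Triple F} (ht : t.1 ≠ 0) :
    ¬Primitive (raiseContent c t) := by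
  rw [primitive_iff_isUnit_content, content_raiseContent c ht]
  intro h
  have := natDegree_eq_zero_of_isUnit h
  rw [natDegree_X_mul_add_C (monic_content ht).ne_zero] at this
  omega

theorem lowerContent_raiseContent (c : F) {t : Triple F} (ht : t.1 ≠ 0) :
    lowerContent (raiseContent c t) = t := by
  rw [lowerContent, content_raiseContent c ht, divX_X_mul_add_C, raiseContent,
    primPart_smul_of_content_eq_one (monic_X_mul_add_C (monic_content ht) c)
      (content_primPart ht), content_smul_primPart]

theorem coeff_content_raiseContent (c : F) {t : Triple F} (ht : t.1 ≠ 0) :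
    (content (raiseContent c t)).coeff 0 = c := by
  simp [content_raiseContent c ht]

theorem raiseContent_lowerContent {t : Triple F} (ht : t.1 ≠ 0) (hnp : ¬Primitive t) :
    raiseContent ((content t).coeff 0) (lowerContent t) = t := by
  rw [raiseContent, content_lowerContent ht hnp, X_mul_divX_add, lowerContent,
    primPart_smul_of_content_eq_one
      (monic_divX (monic_content ht) (one_le_natDegree_content ht hnp)) (content_primPart ht),
    content_smul_primPart]

end Triple

section Pairs

variable {F : Type*} [Field F]

def intersectingPairs (V W : Set (Triple F)) : Set (Triple F × Triple F) :=
  {p | p.1 ∈ V ∧ p.2 ∈ W ∧ Intersecting p.1 p.2}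

theorem finite_setOf_degree_lt [Finite F] (n : ℕ) : {p : F[X] | p.degree < n}.Finite := by
  have : Finite (degreeLT F n) := .of_equiv _ (degreeLTEquiv F n).toEquiv.symm
  exact (degreeLT F n : Set F[X]).toFinite.subset fun _ => mem_degreeLT.mpr

theorem finite_qset [Finite F] (d : ℕ) : (Qset F d).Finite := by
  have hD := finite_setOf_degree_lt (F := F) (d + 1)
  have hd : (d : WithBot ℕ) < ↑(d + 1) := by exact_mod_cast d.lt_succ_self
  refine (hD.prod (hD.prod hD)).subset fun t ⟨hm, hdeg, h₁, h₂⟩ =>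
    ⟨?_, h₁.trans hd, h₂.trans hd⟩
  show t.1.degree < _
  rwa [degree_eq_natDegree hm.ne_zero, hdeg]

open Triple in
theorem bijOn_raiseContent [DecidableEq F] (a : ℕ) (W : Set (Triple F)) :
    Set.BijOn (fun x : F × (Triple F × Triple F) => (raiseContent x.1 x.2.1, x.2.2))
      (Set.univ ×ˢ intersectingPairs (Qset F a) W)
      (intersectingPairs (Qset F (a + 1)) W \ {p | Primitive p.1}) := by
  let lower (p : Triple F × Triple F) : F × (Triple F × Triple F) :=
    ((content p.1).coeff 0, lowerContent p.1, p.2)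
  refine Set.InvOn.bijOn (f' := lower) ⟨?_, ?_⟩ ?_ ?_
  · rintro ⟨c, Q, R⟩ ⟨-, hQ, -⟩
    simp only [lower, coeff_content_raiseContent c hQ.1.ne_zero,
      lowerContent_raiseContent c hQ.1.ne_zero]
  · rintro ⟨Q, R⟩ ⟨⟨hQ, -⟩, hnp⟩
    simp only [lower, raiseContent_lowerContent hQ.1.ne_zero hnp]
  · rintro ⟨c, Q, R⟩ ⟨-, hQ, hR, hQR⟩
    have hQ₀ := hQ.1.ne_zero
    refine ⟨⟨raiseContent_mem_qset c hQ, hR, ?_⟩, not_primitive_raiseContent c hQ₀⟩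
    exact (intersecting_smul_primPart_iff (monic_X_mul_add_C (monic_content hQ₀) c).ne_zero
      hQ₀ R).mpr hQR
  · rintro ⟨Q, R⟩ ⟨⟨hQ, hR, hQR⟩, hnp⟩
    have hQ₀ := hQ.1.ne_zero
    refine ⟨Set.mem_univ _, lowerContent_mem_qset hQ hnp, hR, ?_⟩
    exact (intersecting_smul_primPart_iff (monic_divX (monic_content hQ₀)
      (one_le_natDegree_content hQ₀ hnp)).ne_zero hQ₀ R).mpr hQR

theorem ncard_intersectingPairs_qset_succ [Finite F] (a : ℕ) {W : Set (Triple F)}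
    (hW : W.Finite) :
    (intersectingPairs (Qset F (a + 1)) W).ncard =
      (intersectingPairs (Qset F (a + 1) ∩ {t | Primitive t}) W).ncard +
        Nat.card F * (intersectingPairs (Qset F a) W).ncard := by
  classical
  have hprim : intersectingPairs (Qset F (a + 1) ∩ {t | Primitive t}) W =
      intersectingPairs (Qset F (a + 1)) W ∩ {p | Primitive p.1} := by
    ext
    simp only [intersectingPairs, Set.mem_inter_iff, Set.mem_ofPred_eq]
    tauto
  have hfin : (intersectingPairs (Qset F (a + 1)) W).Finite :=
    ((finite_qset _).prod hW).subset fun _ ⟨hQ, hR, _⟩ => ⟨hQ, hR⟩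
  have hbij := bijOn_raiseContent a W
  rw [hprim, ← Set.ncard_inter_add_ncard_sdiff_eq_ncard _ _ hfin, ← hbij.image_eq,
    hbij.injOn.ncard_image, Set.ncard_prod, Set.ncard_univ]

end Pairs

section Reversal

variable {F : Type*} [Field F]

def tripleRev (t : Triple F) : Triple F := (t.2.2, t.2.1, t.1)

theorem tripleRev_involutive : Function.Involutive (tripleRev (F := F)) := fun _ => rfl

theorem preimage_tripleRev_rset (d : ℕ) : tripleRev ⁻¹' Rset F d = Qset F d := by
  ext
  simp only [Set.mem_preimage, Qset, Rset, tripleRev, Set.mem_ofPred_eq]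
  tauto

theorem preimage_tripleRev_qset (d : ℕ) : tripleRev ⁻¹' Qset F d = Rset F d := by
  rw [← preimage_tripleRev_rset, ← Set.preimage_comp, tripleRev_involutive.comp_self,
    Set.preimage_id]

theorem preimage_tripleRev_setOf_primitive :
    tripleRev ⁻¹' {t : Triple F | Primitive t} = {t | Primitive t} := by
  ext
  simp only [Set.mem_preimage, Set.mem_ofPred_eq, Primitive, tripleRev]
  exact ⟨fun h g h₀ h₁ h₂ => h g h₂ h₁ h₀, fun h g h₀ h₁ h₂ => h g h₂ h₁ h₀⟩

theorem intersecting_tripleRev_iff (Q R : Triple F) :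
    Intersecting (tripleRev R) (tripleRev Q) ↔ Intersecting Q R := by
  simp only [Intersecting, tripleRev]
  constructor <;> intro h <;> linear_combination h

theorem finite_rset [Finite F] (d : ℕ) : (Rset F d).Finite := by
  rw [← preimage_tripleRev_qset]
  exact (finite_qset d).preimage tripleRev_involutive.injective.injOn

theorem ncard_intersectingPairs_tripleRev (V W : Set (Triple F)) :
    (intersectingPairs V W).ncard =
      (intersectingPairs (tripleRev ⁻¹' W) (tripleRev ⁻¹' V)).ncard := by
  let σ (p : Triple F × Triple F) : Triple F × Triple F := (tripleRev p.2, tripleRev p.1)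
  have hσ : Function.Involutive σ := fun _ => rfl
  have hpre : intersectingPairs (tripleRev ⁻¹' W) (tripleRev ⁻¹' V) =
      σ ⁻¹' intersectingPairs V W := by
    ext p
    simp only [intersectingPairs, Set.mem_preimage, Set.mem_ofPred_eq, σ,
      intersecting_tripleRev_iff]
    tauto
  rw [hpre, ← hσ.image_eq_preimage_symm, Set.ncard_image_of_injective _ hσ.injective]

end Reversal

theorem stmt_8 (F : Type*) [Field F] [Fintype F] (q : ℕ) (hq : q = Fintype.card F)
    (d₁ d₂ : ℕ) (h1 : 1 ≤ d₁) (h2 : 1 ≤ d₂)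
    (N : ℕ)
    (hN : N = Set.ncard {p : (F[X] × F[X] × F[X]) × (F[X] × F[X] × F[X]) |
        p.1 ∈ Qset F d₁ ∧ p.2 ∈ Rset F d₂ ∧ Primitive p.1 ∧ Primitive p.2 ∧
        Intersecting p.1 p.2})
    (T : ℕ → ℕ → ℕ)
    (hT : ∀ a b : ℕ, T a b = Set.ncard {p : (F[X] × F[X] × F[X]) × (F[X] × F[X] × F[X]) |
        p.1 ∈ Qset F a ∧ p.2 ∈ Rset F b ∧ Intersecting p.1 p.2}) :
    N + q * T (d₁ - 1) d₂ + q * T d₁ (d₂ - 1) = T d₁ d₂ + q ^ 2 * T (d₁ - 1) (d₂ - 1) := by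
  obtain ⟨a, rfl⟩ : ∃ a, d₁ = a + 1 := ⟨d₁ - 1, by omega⟩
  obtain ⟨b, rfl⟩ : ∃ b, d₂ = b + 1 := ⟨d₂ - 1, by omega⟩
  set P := {t : Triple F | Primitive t}
  have hT' (c d : ℕ) : T c d = (intersectingPairs (Qset F c) (Rset F d)).ncard := hT c d
  have hPrimSwap (c : ℕ) : (intersectingPairs (Qset F (a + 1) ∩ P) (Rset F c)).ncard =
      (intersectingPairs (Qset F c) (Rset F (a + 1) ∩ P)).ncard := by
    rw [ncard_intersectingPairs_tripleRev, Set.preimage_inter, preimage_tripleRev_rset,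
      preimage_tripleRev_qset, preimage_tripleRev_setOf_primitive]
  have hN' : N = (intersectingPairs (Qset F (b + 1) ∩ P) (Rset F (a + 1) ∩ P)).ncard := by
    rw [hN, ncard_intersectingPairs_tripleRev, Set.preimage_inter, Set.preimage_inter,
      preimage_tripleRev_rset, preimage_tripleRev_qset, preimage_tripleRev_setOf_primitive]
    congr 1
    ext
    simp only [intersectingPairs, Set.mem_inter_iff, Set.mem_ofPred_eq]
    tauto
  have hSplit := ncard_intersectingPairs_qset_succ a (finite_rset (F := F) (b + 1))
  have hSplitPred := ncard_intersectingPairs_qset_succ a (finite_rset (F := F) b)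
  have hSplitPrim :=
    ncard_intersectingPairs_qset_succ b ((finite_rset (F := F) (a + 1)).inter_of_left P)
  simp only [Nat.add_sub_cancel, hq, ← Nat.card_eq_fintype_card, hT', hN']
  rw [hSplit, hSplitPred, hPrimSwap, hPrimSwap, hSplitPrim]
  ring
end

section
/- Let d_b ≥ d_a ≥ 1 be integers, let Q = (q₀, q₁, q₂) ∈ 𝒬_{d_a}, and let g = gcd(q₀, q₁, q₂). Then for every polynomial h ∈ 𝔽[X] with deg h < d_a + d_b such that g divides h, there exist polynomials ρ₀, ρ₁, ρ₂ ∈ 𝔽[X], each of degree < d_b, with q₀ρ₀ + q₁ρ₁ + q₂ρ₂ = h. (That is, the image of the linear map (ρ₀, ρ₁, ρ₂) ↦ q₀ρ₀ + q₁ρ₁ + q₂ρ₂ on the space of triples of polynomials of degree < d_b is exactly the set of multiples of g of degree < d_a + d_b.) -/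
open Polynomial

/-!
Since `F[X]` is a Bézout domain, `gcd q₀ (gcd q₁ q₂) ∣ h` gives some solution
`q₀ x + q₁ y + q₂ z = h` without degree control. Reducing `y` and `z` modulo the monic `q₀` and
absorbing the quotients into `x` yields `ρ₁, ρ₂` of degree `< d_a ≤ d_b`; then
`q₀ ρ₀ = h - q₁ ρ₁ - q₂ ρ₂` has degree `< d_a + d_b`, and since `q₀` is monic of degree `d_a`,
`ρ₀` has degree `< d_b`.
-/

theorem exists_mul_add_mul_add_mul_eq_of_gcd_dvd {R : Type*} [CommRing R] [IsDomain R]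
    [IsBezout R] [GCDMonoid R] {a b c h : R} (hh : gcd a (gcd b c) ∣ h) :
    ∃ x y z, a * x + b * y + c * z = h := by
  have hmem : h ∈ Ideal.span {a, gcd b c} := by
    rw [← span_gcd]; exact Ideal.mem_span_singleton.mpr hh
  have hbc : gcd b c ∈ Ideal.span {b, c} := by
    rw [← span_gcd]; exact Ideal.mem_span_singleton_self _
  obtain ⟨u, v, rfl⟩ := Ideal.mem_span_pair.mp hmem
  obtain ⟨s, t, hst⟩ := Ideal.mem_span_pair.mp hbc
  exact ⟨u, v * s, v * t, by rw [← hst]; ring⟩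

namespace Polynomial

variable {R : Type*} [CommRing R]

theorem degree_mul_lt_add {p q : R[X]} {m n : ℕ} (hp : p.degree < m) (hq : q.degree < n) :
    (p * q).degree < ↑(m + n) := by
  refine (degree_mul_le p q).trans_lt ?_
  rcases eq_or_ne p.degree ⊥ with hp0 | hp0
  · simp [hp0]
  rw [Nat.cast_add]
  exact WithBot.add_lt_add_of_le_of_lt hp0 hp.le hq

theorem degree_lt_of_monic_mul_degree_lt {q p : R[X]} {d n : ℕ} (hq : q.Monic)
    (hqd : q.natDegree = d) (h : (q * p).degree < ↑(d + n)) : p.degree < n := by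
  nontriviality R
  rw [hq.degree_mul_comm, hq.degree_mul, degree_eq_natDegree hq.ne_zero, hqd, Nat.cast_add,
    add_comm] at h
  exact (WithBot.add_lt_add_iff_left WithBot.coe_ne_bot).mp h

theorem exists_degree_lt_of_mul_add_mul_add_mul_eq {q₀ q₁ q₂ x y z h : R[X]} {d n : ℕ}
    (hq₀ : q₀.Monic) (hd : q₀.natDegree = d) (hq₁ : q₁.degree < d) (hq₂ : q₂.degree < d)
    (hdn : d ≤ n) (hh : h.degree < ↑(d + n)) (hxyz : q₀ * x + q₁ * y + q₂ * z = h) :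
    ∃ ρ₀ ρ₁ ρ₂ : R[X], ρ₀.degree < n ∧ ρ₁.degree < n ∧ ρ₂.degree < n ∧
      q₀ * ρ₀ + q₁ * ρ₁ + q₂ * ρ₂ = h := by
  nontriviality R
  have hrem (p : R[X]) : (p %ₘ q₀).degree < n := by
    refine (degree_modByMonic_lt p hq₀).trans_le ?_
    rw [degree_eq_natDegree hq₀.ne_zero, hd]
    exact_mod_cast hdn
  set ρ₀ := x + q₁ * (y /ₘ q₀) + q₂ * (z /ₘ q₀)
  have hρ₀ : q₀ * ρ₀ = h - q₁ * (y %ₘ q₀) - q₂ * (z %ₘ q₀) := by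
    linear_combination hxyz + q₁ * modByMonic_add_div y q₀ + q₂ * modByMonic_add_div z q₀
  refine ⟨ρ₀, y %ₘ q₀, z %ₘ q₀, ?_, hrem y, hrem z, by rw [hρ₀]; ring⟩
  apply degree_lt_of_monic_mul_degree_lt hq₀ hd
  rw [hρ₀]
  refine (degree_sub_le _ _).trans_lt (max_lt ((degree_sub_le _ _).trans_lt (max_lt hh ?_)) ?_)
  · exact degree_mul_lt_add hq₁ (hrem y)
  · exact degree_mul_lt_add hq₂ (hrem z)

end Polynomial

theorem stmt_9_general (F : Type*) [Field F] [DecidableEq F]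
    (da db : ℕ) (h2 : da ≤ db)
    (Q : F[X] × F[X] × F[X]) (hQ : Q ∈ Qset F da)
    (g : F[X]) (hg : g = gcd Q.1 (gcd Q.2.1 Q.2.2)) :
    ∀ h : F[X], h.degree < ((da + db : ℕ) : WithBot ℕ) → g ∣ h →
      ∃ ρ₀ ρ₁ ρ₂ : F[X],
        ρ₀.degree < (db : WithBot ℕ) ∧ ρ₁.degree < (db : WithBot ℕ) ∧
        ρ₂.degree < (db : WithBot ℕ) ∧
        Q.1 * ρ₀ + Q.2.1 * ρ₁ + Q.2.2 * ρ₂ = h := by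
  obtain ⟨hmonic, hdeg, hdeg₁, hdeg₂⟩ := hQ
  intro h hh hgh
  obtain ⟨x, y, z, hxyz⟩ := exists_mul_add_mul_add_mul_eq_of_gcd_dvd (hg ▸ hgh)
  exact exists_degree_lt_of_mul_add_mul_add_mul_eq hmonic hdeg hdeg₁ hdeg₂ h2 hh hxyz

theorem stmt_9 (F : Type*) [Field F] [Fintype F] [DecidableEq F]
    (da db : ℕ) (h1 : 1 ≤ da) (h2 : da ≤ db)
    (Q : F[X] × F[X] × F[X]) (hQ : Q ∈ Qset F da)
    (g : F[X]) (hg : g = gcd Q.1 (gcd Q.2.1 Q.2.2)) :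
    ∀ h : F[X], h.degree < ((da + db : ℕ) : WithBot ℕ) → g ∣ h →
      ∃ ρ₀ ρ₁ ρ₂ : F[X],
        ρ₀.degree < (db : WithBot ℕ) ∧ ρ₁.degree < (db : WithBot ℕ) ∧
        ρ₂.degree < (db : WithBot ℕ) ∧
        Q.1 * ρ₀ + Q.2.1 * ρ₁ + Q.2.2 * ρ₂ = h :=
  stmt_9_general F da db h2 Q hQ g hg
end
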